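/- arXiv:1610.00682 — 9 statements merged into one kernel-verified Lean document; each statement's English description precedes it below -/
import Mathlib

section
/- Let U, V, W be finite-dimensional real vector spaces and let A ⊆ U, B ⊆ V, C ⊆ W be nonempty compact convex subsets. Then the canonical linear equivalence U ⊗ (V × W) ≃ (U ⊗ V) × (U ⊗ W) (sending u ⊗ (v, w) to (u ⊗ v, u ⊗ w)) maps the minimal tensor product A ⊠ (B ⊕ C) bijectively onto the direct sum (A ⊠ B) ⊕ (A ⊠ C). In other words, the direct sum ⊕ distributes over the minimal tensor product ⊠. -/
open scoped TensorProduct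

noncomputable section

/-- The minimal tensor product of two state spaces: the convex hull of products of states. -/
def minTensor {V W : Type*} [AddCommGroup V] [Module ℝ V] [AddCommGroup W] [Module ℝ W]
    (A : Set V) (B : Set W) : Set (V ⊗[ℝ] W) :=
  convexHull ℝ {x : V ⊗[ℝ] W | ∃ a ∈ A, ∃ b ∈ B, x = a ⊗ₜ[ℝ] b}

/-- The direct sum of two state spaces. -/
def dirSum {V W : Type*} [AddCommGroup V] [Module ℝ V] [AddCommGroup W] [Module ℝ W]
    (A : Set V) (B : Set W) : Set (V × W) :=
  convexHull ℝ ({p : V × W | ∃ a ∈ A, p = (a, 0)} ∪ {p : V × W | ∃ b ∈ B, p = (0, b)})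

/-- The direct sum distributes over the minimal tensor product. -/
theorem direct_sum_distributes_over_minTensor {U V W : Type*}
    [NormedAddCommGroup U] [NormedSpace ℝ U] [FiniteDimensional ℝ U]
    [NormedAddCommGroup V] [NormedSpace ℝ V] [FiniteDimensional ℝ V]
    [NormedAddCommGroup W] [NormedSpace ℝ W] [FiniteDimensional ℝ W]
    (A : Set U) (B : Set V) (C : Set W)
    (hA : A.Nonempty) (hAc : IsCompact A) (hAv : Convex ℝ A)
    (hB : B.Nonempty) (hBc : IsCompact B) (hBv : Convex ℝ B)
    (hC : C.Nonempty) (hCc : IsCompact C) (hCv : Convex ℝ C)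
    (φ : (U ⊗[ℝ] (V × W)) ≃ₗ[ℝ] (U ⊗[ℝ] V) × (U ⊗[ℝ] W))
    (hφ : ∀ (u : U) (v : V) (w : W), φ (u ⊗ₜ[ℝ] (v, w)) = (u ⊗ₜ[ℝ] v, u ⊗ₜ[ℝ] w)) :
    ⇑φ '' minTensor A (dirSum B C) = dirSum (minTensor A B) (minTensor A C) := by
  set genBC : Set (V × W) :=
    ({p : V × W | ∃ b ∈ B, p = (b, 0)} ∪ {p : V × W | ∃ c ∈ C, p = (0, c)}) with hgenBC
  set S : Set (U ⊗[ℝ] (V × W)) :=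
    {x | ∃ a ∈ A, ∃ d ∈ dirSum B C, x = a ⊗ₜ[ℝ] d} with hS
  set genT : Set ((U ⊗[ℝ] V) × (U ⊗[ℝ] W)) :=
    ({p | ∃ x ∈ minTensor A B, p = (x, 0)} ∪ {p | ∃ y ∈ minTensor A C, p = (0, y)})
    with hgenT
  have himg : ⇑φ '' minTensor A (dirSum B C) = convexHull ℝ (⇑φ '' S) :=
    φ.toLinearMap.image_convexHull S
  rw [himg]
  apply le_antisymm
  · -- hull (φ '' S) ⊆ dirSum ... : suffices φ '' S ⊆ hull genT
    apply convexHull_min _ (convex_convexHull ℝ genT)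
    rintro _ ⟨_, ⟨a, ha, d, hd, rfl⟩, rfl⟩
    -- φ (a ⊗ d) with d ∈ convexHull genBC
    set L : (V × W) →ₗ[ℝ] (U ⊗[ℝ] V) × (U ⊗[ℝ] W) :=
      φ.toLinearMap.comp (TensorProduct.mk ℝ U (V × W) a) with hL
    have : φ (a ⊗ₜ[ℝ] d) = L d := rfl
    rw [this]
    have hmem : L d ∈ L '' convexHull ℝ genBC := ⟨d, hd, rfl⟩
    rw [L.image_convexHull] at hmem
    refine convexHull_mono ?_ hmem
    rintro _ ⟨p, hp | hp, rfl⟩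
    · obtain ⟨b, hb, rfl⟩ := hp
      exact Or.inl ⟨a ⊗ₜ[ℝ] b, subset_convexHull ℝ _ ⟨a, ha, b, hb, rfl⟩, by
        simp [hL, hφ]⟩
    · obtain ⟨c, hc, rfl⟩ := hp
      exact Or.inr ⟨a ⊗ₜ[ℝ] c, subset_convexHull ℝ _ ⟨a, ha, c, hc, rfl⟩, by
        simp [hL, hφ]⟩
  · -- dirSum ... ⊆ hull (φ '' S) : suffices genT ⊆ hull (φ '' S)
    apply convexHull_min _ (convex_convexHull ℝ _)
    rintro p (⟨x, hx, rfl⟩ | ⟨y, hy, rfl⟩)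
    · set g : (U ⊗[ℝ] V) →ₗ[ℝ] (U ⊗[ℝ] V) × (U ⊗[ℝ] W) := LinearMap.inl ℝ _ _
      have hmem : g x ∈ g '' convexHull ℝ {z : U ⊗[ℝ] V | ∃ a ∈ A, ∃ b ∈ B, z = a ⊗ₜ[ℝ] b} :=
        ⟨x, hx, rfl⟩
      rw [g.image_convexHull] at hmem
      refine convexHull_mono ?_ hmem
      rintro _ ⟨z, ⟨a, ha, b, hb, rfl⟩, rfl⟩
      refine ⟨a ⊗ₜ[ℝ] (b, 0), ⟨a, ha, (b, 0), subset_convexHull ℝ _ (Or.inl ⟨b, hb, rfl⟩), rfl⟩, ?_⟩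
      simp [g, hφ]
    · set g : (U ⊗[ℝ] W) →ₗ[ℝ] (U ⊗[ℝ] V) × (U ⊗[ℝ] W) := LinearMap.inr ℝ _ _
      have hmem : g y ∈ g '' convexHull ℝ {z : U ⊗[ℝ] W | ∃ a ∈ A, ∃ c ∈ C, z = a ⊗ₜ[ℝ] c} :=
        ⟨y, hy, rfl⟩
      rw [g.image_convexHull] at hmem
      refine convexHull_mono ?_ hmem
      rintro _ ⟨z, ⟨a, ha, c, hc, rfl⟩, rfl⟩
      refine ⟨a ⊗ₜ[ℝ] (0, c), ⟨a, ha, (0, c), subset_convexHull ℝ _ (Or.inr ⟨c, hc, rfl⟩), rfl⟩, ?_⟩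
      simp [g, hφ]
end
end

section
/- (Transitive state spaces with a classical degree of freedom have a classical subsystem.) Let S be a nonempty compact convex subset of a finite-dimensional real vector space V that spans V, equipped with a linear functional u : V → ℝ with u(s) = 1 for all s ∈ S. Suppose S is transitive (for any two extreme points x, y of S there is a linear automorphism T of V with T(S) = S and T(x) = y) and S is decomposable (there exist nonempty compact convex subsets S₁, S₂ ⊆ V whose linear spans intersect only in 0 with S = convexHull(S₁ ∪ S₂)). Then there exist an integer n ≥ 2, a finite-dimensional real vector space W, a nonempty compact convex subset C ⊆ W, and a linear equivalence φ : V ≃ ℝⁿ ⊗ W such that φ(S) = Δ_{n-1} ⊠ C, where Δ_{n-1} is the standard simplex in ℝⁿ (the convex hull of the standard basis vectors) and ⊠ is the minimal tensor product. -/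
/-!
Choose a decomposition `S = conv (⋃ i, S ∩ U i)` along an independent family of subspaces `U i`
with the largest possible number `n ≥ 2` of parts; picking a nonzero point in each part shows
that `n ≤ dim V`. Each part is a face of `S`. By maximality, each part lies on one side of any
splitting `S = conv ((S ∩ W₁) ∪ (S ∩ W₂))` with `W₁ ⊓ W₂ = ⊥`, since a part meeting both sides
could be cut in two, giving `n + 1` parts. Applied to the splitting along a part, pulled back by
a symmetry `T` of `S`, this shows that `T` maps the part containing a point `x` of `S` onto the
part containing `T x`. Transitivity on extreme
points of the parts (which are extreme points of `S`) then gives symmetries `T i` carrying the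
part `S ∩ U i₀` onto `S ∩ U i`. The spans of the parts are independent and span `V`, so
`eᵢ ⊗ c ↦ T i c` is a linear isomorphism `ℝⁿ ⊗ span (S ∩ U i₀) ≃ V`; it maps
`Δ_{n-1} ⊠ (S ∩ U i₀)` onto `S`.
-/

open scoped TensorProduct

noncomputable section

/-- The standard simplex `Δ_{n-1}` in `ℝⁿ`: the convex hull of the standard basis vectors. -/
def simplexSet (n : ℕ) : Set (Fin n → ℝ) :=
  convexHull ℝ {x : Fin n → ℝ | ∃ i : Fin n, x = Pi.single i 1}

/-- A state space is decomposable (has a classical degree of freedom) if it is the convex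
hull of the union of two nonempty compact convex sets whose linear spans intersect only
in `0`. -/
def Decomposable {V : Type*} [NormedAddCommGroup V] [NormedSpace ℝ V] (S : Set V) : Prop :=
  ∃ S₁ S₂ : Set V, S₁.Nonempty ∧ IsCompact S₁ ∧ Convex ℝ S₁ ∧
    S₂.Nonempty ∧ IsCompact S₂ ∧ Convex ℝ S₂ ∧
    Submodule.span ℝ S₁ ⊓ Submodule.span ℝ S₂ = ⊥ ∧
    S = convexHull ℝ (S₁ ∪ S₂)

open Set

theorem Submodule.span_convexHull {E : Type*} [AddCommGroup E] [Module ℝ E] (s : Set E) :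
    span ℝ (convexHull ℝ s) = span ℝ s :=
  le_antisymm (span_le.2 (convexHull_min subset_span (span ℝ s).convex))
    (span_mono (subset_convexHull ℝ s))

theorem IsExtreme.subset_convexHull_inter_union_inter {E : Type*} [AddCommGroup E] [Module ℝ E]
    {S F A B : Set E} (hF : IsExtreme ℝ S F) (hA : Convex ℝ A) (hB : Convex ℝ B)
    (hA₀ : A.Nonempty) (hB₀ : B.Nonempty) (hS : S = convexHull ℝ (A ∪ B)) :
    F ⊆ convexHull ℝ (F ∩ A ∪ F ∩ B) := by
  intro x hx
  have hxS : x ∈ convexJoin ℝ A B := by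
    rw [← hA.convexHull_union hB hA₀ hB₀, ← hS]
    exact hF.subset hx
  obtain ⟨a, ha, b, hb, hxab⟩ := mem_convexJoin.1 hxS
  have haS : a ∈ S := hS ▸ subset_convexHull ℝ _ (Or.inl ha)
  have hbS : b ∈ S := hS ▸ subset_convexHull ℝ _ (Or.inr hb)
  rw [← insert_endpoints_openSegment] at hxab
  rcases hxab with rfl | rfl | hxo
  · exact subset_convexHull ℝ _ (Or.inl ⟨hx, ha⟩)
  · exact subset_convexHull ℝ _ (Or.inr ⟨hx, hb⟩)
  · refine (convex_convexHull ℝ _).segment_subset ?_ ?_ (openSegment_subset_segment ℝ a b hxo)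
    · exact subset_convexHull ℝ _ (Or.inl ⟨hF.left_mem_of_mem_openSegment haS hbS hx hxo, ha⟩)
    · exact subset_convexHull ℝ _ (Or.inr ⟨hF.right_mem_of_mem_openSegment haS hbS hx hxo, hb⟩)

theorem LinearEquiv.image_symm_eq_self {E : Type*} [AddCommGroup E] [Module ℝ E]
    {T : E ≃ₗ[ℝ] E} {S : Set E} (hT : T '' S = S) : T.symm '' S = S := by
  conv_lhs => rw [← hT]
  exact T.toEquiv.symm_image_image S

theorem iSupIndep.optionElim_update {α ι : Type*} [CompleteLattice α] [IsModularLattice α]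
    [DecidableEq ι] {U : ι → α} (hU : iSupIndep U) {i₀ : ι} {a b : α} (ha : a ≤ U i₀)
    (hb : b ≤ U i₀) (hab : Disjoint a b) :
    iSupIndep fun o : Option ι => o.elim b (Function.update U i₀ a) := by
  have hle : ∀ {i j}, j ≠ i → U j ≤ ⨆ (k) (_ : k ≠ i), U k := fun {i} j hj =>
    le_iSup₂ (f := fun k (_ : k ≠ i) => U k) j hj
  have hupdate : ∀ i, Function.update U i₀ a i ≤ U i := fun i => by
    rcases eq_or_ne i i₀ with rfl | hi
    · simpa using ha
    · simp [hi]
  rw [iSupIndep_def]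
  rintro (_ | i)
  · refine (hab.symm.disjoint_sup_right_of_disjoint_sup_left
      ((hU i₀).mono_left (sup_le hb ha))).mono_right (iSup₂_le ?_)
    rintro (_ | j) hj
    · exact absurd rfl hj
    · rcases eq_or_ne j i₀ with rfl | hj'
      · simp
      · simpa [hj'] using le_sup_of_le_right (hle hj')
  · rcases eq_or_ne i i₀ with rfl | hi
    · simp only [Option.elim_some, Function.update_self]
      refine (hab.disjoint_sup_right_of_disjoint_sup_left
        ((hU i).mono_left (sup_le ha hb))).mono_right (iSup₂_le ?_)
      rintro (_ | j) hj
      · exact le_sup_left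
      · have hji : j ≠ i := fun h => hj (h ▸ rfl)
        simpa [hji] using le_sup_of_le_right (hle hji)
    · simp only [Option.elim_some, Function.update_of_ne hi]
      refine (hU i).mono_right (iSup₂_le ?_)
      rintro (_ | j) hj
      · exact hb.trans (hle hi.symm)
      · exact (hupdate j).trans (hle fun h => hj (h ▸ rfl))

section ClassicalDecomposition

variable {V : Type*} [AddCommGroup V] [Module ℝ V] {S : Set V} {u : V →ₗ[ℝ] ℝ}

theorem zero_notMem_of_forall_eq_one (hu : ∀ s ∈ S, u s = 1) : (0 : V) ∉ S :=
  fun h => by simpa using hu 0 h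

structure IsClassicalSplitting (S : Set V) (W₁ W₂ : Submodule ℝ V) : Prop where
  disjoint : Disjoint W₁ W₂
  nonempty_left : (S ∩ W₁).Nonempty
  nonempty_right : (S ∩ W₂).Nonempty
  eq_convexHull : S = convexHull ℝ (S ∩ W₁ ∪ S ∩ W₂)

structure IsClassicalDecomposition {ι : Type*} (S : Set V) (U : ι → Submodule ℝ V) : Prop where
  iSupIndep : iSupIndep U
  nonempty : ∀ i, (S ∩ U i).Nonempty
  eq_convexHull : S = convexHull ℝ (⋃ i, S ∩ U i)

def ClassicalDecompositionsBoundedBy (S : Set V) (n : ℕ) : Prop :=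
  ∀ m (U : Fin m → Submodule ℝ V), IsClassicalDecomposition S U → m ≤ n

namespace IsClassicalSplitting

variable {W₁ W₂ : Submodule ℝ V}

theorem convex (h : IsClassicalSplitting S W₁ W₂) : Convex ℝ S :=
  h.eq_convexHull ▸ convex_convexHull ℝ _

theorem eq_convexJoin (h : IsClassicalSplitting S W₁ W₂) :
    S = convexJoin ℝ (S ∩ W₁) (S ∩ W₂) := by
  rw [← (h.convex.inter W₁.convex).convexHull_union (h.convex.inter W₂.convex) h.nonempty_left
    h.nonempty_right, ← h.eq_convexHull]

/-- The face is cut out by the functional that vanishes on `W₁` and agrees with `u` on `W₂`,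
which is nonnegative on `S`. -/
theorem isExtreme_left (h : IsClassicalSplitting S W₁ W₂) (hu : ∀ s ∈ S, u s = 1) :
    IsExtreme ℝ S (S ∩ W₁) := by
  obtain ⟨W, hW₂W, hW⟩ := h.disjoint.symm.exists_isCompl
  set f : V →ₗ[ℝ] ℝ := u ∘ₗ W.projection W₁ hW
  have hf₁ : ∀ x ∈ W₁, f x = 0 := fun x hx => by
    simp [f, Submodule.projection_apply_of_mem_right hW hx]
  have hf₂ : ∀ x ∈ S ∩ W₂, f x = 1 := fun x hx => by
    simp [f, Submodule.projection_apply_of_mem_left hW (hW₂W hx.2), hu x hx.1]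
  have hfS : ∀ y ∈ S, 0 ≤ f y ∧ (f y = 0 → y ∈ W₁) := by
    intro y hy
    rw [h.eq_convexJoin, mem_convexJoin] at hy
    obtain ⟨p, hp, q, hq, a, b, ha, hb, hab, rfl⟩ := hy
    have hfy : f (a • p + b • q) = b := by simp [hf₁ p hp.2, hf₂ q hq]
    rw [hfy]
    refine ⟨hb, fun hb0 => ?_⟩
    obtain rfl : a = 1 := by linarith
    simpa [hb0] using hp.2
  refine ⟨inter_subset_left, fun x₁ hx₁ x₂ hx₂ x hx ⟨a, b, ha, hb, hab, hxe⟩ => ⟨hx₁, ?_⟩⟩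
  have hsum : a * f x₁ + b * f x₂ = 0 := by
    simpa [← hxe] using hf₁ x hx.2
  have h₁ := hfS x₁ hx₁
  have h₂ := hfS x₂ hx₂
  exact h₁.2 (by nlinarith [h₁.1, h₂.1])

theorem map (h : IsClassicalSplitting S W₁ W₂) (T : V ≃ₗ[ℝ] V) (hT : T '' S = S) :
    IsClassicalSplitting S (W₁.map (T : V →ₗ[ℝ] V)) (W₂.map (T : V →ₗ[ℝ] V)) := by
  have hinter : ∀ W : Submodule ℝ V, S ∩ W.map (T : V →ₗ[ℝ] V) = T '' (S ∩ W) := fun W => by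
    rw [image_inter T.injective, hT, Submodule.map_coe]
    rfl
  refine ⟨Submodule.disjoint_map T.injective h.disjoint, ?_, ?_, ?_⟩
  · rw [hinter]
    exact h.nonempty_left.image _
  · rw [hinter]
    exact h.nonempty_right.image _
  · rw [hinter, hinter, ← image_union, ← LinearEquiv.coe_coe, ← LinearMap.image_convexHull,
      ← h.eq_convexHull, LinearEquiv.coe_coe, hT]

end IsClassicalSplitting

namespace IsClassicalDecomposition

variable {ι : Type*} {U : ι → Submodule ℝ V}

theorem convex (hU : IsClassicalDecomposition S U) : Convex ℝ S :=
  hU.eq_convexHull ▸ convex_convexHull ℝ _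

theorem comp_equiv {κ : Type*} (hU : IsClassicalDecomposition S U) (e : κ ≃ ι) :
    IsClassicalDecomposition S (U ∘ e) :=
  ⟨hU.iSupIndep.comp e.injective, fun k => hU.nonempty (e k), by
    simpa [e.surjective.iUnion_comp fun i => S ∩ (U i : Set V)] using hU.eq_convexHull⟩

theorem isClassicalSplitting [Nontrivial ι] (hU : IsClassicalDecomposition S U) (i : ι) :
    IsClassicalSplitting S (U i) (⨆ (j) (_ : j ≠ i), U j) := by
  have hle : ∀ j ≠ i, U j ≤ ⨆ (j) (_ : j ≠ i), U j := fun j hj =>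
    le_iSup₂ (f := fun j (_ : j ≠ i) => U j) j hj
  obtain ⟨j, hj⟩ := exists_ne i
  refine ⟨hU.iSupIndep i, hU.nonempty i, ?_, ?_⟩
  · obtain ⟨x, hxS, hxU⟩ := hU.nonempty j
    exact ⟨x, hxS, hle j hj hxU⟩
  · refine (hU.eq_convexHull.trans_subset (convexHull_mono ?_)).antisymm
      (convexHull_min (union_subset inter_subset_left inter_subset_left) hU.convex)
    refine iUnion_subset fun k x hx => ?_
    by_cases hk : k = i
    · exact Or.inl (hk ▸ hx)
    · exact Or.inr ⟨hx.1, hle k hk hx.2⟩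

theorem isExtreme [Nontrivial ι] (hU : IsClassicalDecomposition S U) (hu : ∀ s ∈ S, u s = 1)
    (i : ι) : IsExtreme ℝ S (S ∩ U i) :=
  (hU.isClassicalSplitting i).isExtreme_left hu

theorem refine_of_not_subset [Nontrivial ι] [DecidableEq ι] (hU : IsClassicalDecomposition S U)
    (hu : ∀ s ∈ S, u s = 1) {W₁ W₂ : Submodule ℝ V} (hW : IsClassicalSplitting S W₁ W₂) {i₀ : ι}
    (h₁ : ¬ S ∩ U i₀ ⊆ W₁) (h₂ : ¬ S ∩ U i₀ ⊆ W₂) :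
    IsClassicalDecomposition S
      fun o : Option ι => o.elim (U i₀ ⊓ W₂) (Function.update U i₀ (U i₀ ⊓ W₁)) := by
  have hpart : ∀ W : Submodule ℝ V, S ∩ U i₀ ∩ (S ∩ W) = S ∩ ↑(U i₀ ⊓ W) := fun W => by
    ext
    simp only [mem_inter_iff, SetLike.mem_coe, Submodule.mem_inf]
    tauto
  have hjoin : S ∩ U i₀ ⊆ convexHull ℝ (S ∩ ↑(U i₀ ⊓ W₁) ∪ S ∩ ↑(U i₀ ⊓ W₂)) := by
    rw [← hpart, ← hpart]
    exact (hU.isExtreme hu i₀).subset_convexHull_inter_union_inter (hW.convex.inter W₁.convex)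
      (hW.convex.inter W₂.convex) hW.nonempty_left hW.nonempty_right hW.eq_convexHull
  have hne₁ : (S ∩ ↑(U i₀ ⊓ W₁)).Nonempty := by
    refine nonempty_iff_ne_empty.2 fun h => h₂ (hjoin.trans ?_)
    rw [h, empty_union]
    exact convexHull_min (fun x hx => (Submodule.mem_inf.1 hx.2).2) W₂.convex
  have hne₂ : (S ∩ ↑(U i₀ ⊓ W₂)).Nonempty := by
    refine nonempty_iff_ne_empty.2 fun h => h₁ (hjoin.trans ?_)
    rw [h, union_empty]
    exact convexHull_min (fun x hx => (Submodule.mem_inf.1 hx.2).2) W₁.convex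
  refine ⟨hU.iSupIndep.optionElim_update inf_le_left inf_le_left
    (hW.disjoint.mono inf_le_right inf_le_right), ?_, ?_⟩
  · rintro (_ | i)
    · exact hne₂
    · rcases eq_or_ne i i₀ with rfl | hi
      · simpa using hne₁
      · simpa [hi] using hU.nonempty i
  · refine (hU.eq_convexHull.trans_subset (convexHull_min (iUnion_subset fun i => ?_)
      (convex_convexHull ℝ _))).antisymm
      (convexHull_min (iUnion_subset fun _ => inter_subset_left) hU.convex)
    rcases eq_or_ne i i₀ with rfl | hi
    · refine hjoin.trans (convexHull_mono (union_subset ?_ ?_))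
      · exact subset_iUnion_of_subset (some i) (by simp)
      · exact subset_iUnion_of_subset none subset_rfl
    · exact (subset_iUnion_of_subset (some i) (by simp [hi])).trans (subset_convexHull ℝ _)

theorem card_le_finrank [Fintype ι] [FiniteDimensional ℝ V] (hU : IsClassicalDecomposition S U)
    (hu : ∀ s ∈ S, u s = 1) : Fintype.card ι ≤ Module.finrank ℝ V := by
  choose x hxS hxU using hU.nonempty
  exact (iSupIndep.linearIndependent U hU.iSupIndep hxU fun i hx =>
    zero_notMem_of_forall_eq_one hu (hx ▸ hxS i)).fintype_card_le_finrank

theorem exists_maximal [FiniteDimensional ℝ V] (hu : ∀ s ∈ S, u s = 1) {k : ℕ}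
    {U : Fin k → Submodule ℝ V} (hU : IsClassicalDecomposition S U) :
    ∃ n, ∃ U' : Fin n → Submodule ℝ V, IsClassicalDecomposition S U' ∧
      ClassicalDecompositionsBoundedBy S n := by
  classical
  let P m := ∃ U' : Fin m → Submodule ℝ V, IsClassicalDecomposition S U'
  have hbound : ∀ m, P m → m ≤ Module.finrank ℝ V := fun m ⟨U', hU'⟩ => by
    simpa using hU'.card_le_finrank hu
  have hk : k ≤ Module.finrank ℝ V := hbound k ⟨U, hU⟩
  obtain ⟨U', hU'⟩ := Nat.findGreatest_spec (P := P) hk ⟨U, hU⟩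
  exact ⟨_, U', hU', fun m U'' hU'' => Nat.le_findGreatest (hbound m ⟨U'', hU''⟩) ⟨U'', hU''⟩⟩

section Maximal

variable [Fintype ι] [Nontrivial ι]

theorem subset_or_subset_of_maximal (hU : IsClassicalDecomposition S U) (hu : ∀ s ∈ S, u s = 1)
    (hmax : ClassicalDecompositionsBoundedBy S (Fintype.card ι))
    {W₁ W₂ : Submodule ℝ V} (hW : IsClassicalSplitting S W₁ W₂) (i : ι) :
    S ∩ U i ⊆ W₁ ∨ S ∩ U i ⊆ W₂ := by
  classical
  by_contra! h
  have hfiner := (hU.refine_of_not_subset hu hW h.1 h.2).comp_equiv (Fintype.equivFin _).symm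
  simpa using hmax _ _ hfiner

theorem image_subset_of_maximal (hU : IsClassicalDecomposition S U) (hu : ∀ s ∈ S, u s = 1)
    (hmax : ClassicalDecompositionsBoundedBy S (Fintype.card ι))
    {T : V ≃ₗ[ℝ] V} (hT : T '' S = S) {i k : ι} {x : V} (hx : x ∈ S ∩ U i) (hTx : T x ∈ U k) :
    T '' (S ∩ U i) ⊆ S ∩ U k := by
  have hsplit := (hU.isClassicalSplitting k).map T.symm (LinearEquiv.image_symm_eq_self hT)
  have hxk : x ∈ (U k).map (T.symm : V →ₗ[ℝ] V) := ⟨T x, hTx, by simp⟩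
  rcases hU.subset_or_subset_of_maximal hu hmax hsplit i with h | h
  · rintro _ ⟨y, hy, rfl⟩
    obtain ⟨z, hz, rfl⟩ := h hy
    exact ⟨hT ▸ mem_image_of_mem T hy.1, by simpa using hz⟩
  · have hx0 : x = 0 := Submodule.disjoint_def.1 hsplit.disjoint x hxk (h hx)
    exact absurd (hx0 ▸ hx.1) (zero_notMem_of_forall_eq_one hu)

theorem image_eq_of_maximal (hU : IsClassicalDecomposition S U) (hu : ∀ s ∈ S, u s = 1)
    (hmax : ClassicalDecompositionsBoundedBy S (Fintype.card ι))
    {T : V ≃ₗ[ℝ] V} (hT : T '' S = S) {i k : ι} {x : V} (hx : x ∈ S ∩ U i)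
    (hTx : T x ∈ S ∩ U k) :
    T '' (S ∩ U i) = S ∩ U k := by
  refine (hU.image_subset_of_maximal hu hmax hT hx hTx.2).antisymm fun y hy => ?_
  have := hU.image_subset_of_maximal hu hmax (LinearEquiv.image_symm_eq_self hT) hTx
    (by simpa using hx.2)
  exact ⟨T.symm y, this ⟨y, hy, rfl⟩, by simp⟩

end Maximal

end IsClassicalDecomposition

end ClassicalDecomposition

theorem Decomposable.exists_isClassicalDecomposition {V : Type*} [NormedAddCommGroup V]
    [NormedSpace ℝ V] {S : Set V} (h : Decomposable S) :
    ∃ U : Fin 2 → Submodule ℝ V, IsClassicalDecomposition S U := by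
  obtain ⟨S₁, S₂, h₁, -, -, h₂, -, -, hdisj, rfl⟩ := h
  have hsub : ∀ {T}, T ⊆ S₁ ∪ S₂ → T ⊆ convexHull ℝ (S₁ ∪ S₂) ∩ Submodule.span ℝ T :=
    fun hT => subset_inter (hT.trans (subset_convexHull ℝ _)) Submodule.subset_span
  refine ⟨![Submodule.span ℝ S₁, Submodule.span ℝ S₂],
    (iSupIndep_pair (i := 0) (j := 1) (by decide) fun k => by fin_cases k <;> simp).2
      (disjoint_iff.2 hdisj),
    fun k => ?_, ?_⟩
  · fin_cases k
    · exact h₁.mono (hsub subset_union_left)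
    · exact h₂.mono (hsub subset_union_right)
  · refine (convexHull_mono (union_subset ?_ ?_)).antisymm
      (convexHull_min (iUnion_subset fun _ => inter_subset_left) (convex_convexHull ℝ _))
    · exact (hsub subset_union_left).trans (subset_iUnion_of_subset 0 subset_rfl)
    · exact (hsub subset_union_right).trans (subset_iUnion_of_subset 1 subset_rfl)

section Tensor

open TensorProduct

variable {V W : Type*} [AddCommGroup V] [Module ℝ V] [AddCommGroup W] [Module ℝ W]

theorem bijective_lsum_of_iSupIndep {ι : Type*} [Fintype ι] [DecidableEq ι]
    {f : ι → W →ₗ[ℝ] V} (hf : ∀ i, Function.Injective (f i))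
    (hind : iSupIndep fun i => LinearMap.range (f i)) (htop : ⨆ i, LinearMap.range (f i) = ⊤) :
    Function.Bijective (LinearMap.lsum ℝ (fun _ => W) ℝ f) := by
  refine ⟨fun g g' hgg' => funext fun i => hf i ?_, ?_⟩
  · refine (iSupIndep_iff_finsetSum_eq_imp_eq _).1 hind Finset.univ (fun i => f i (g i))
      (fun i => f i (g' i)) (fun i _ => ⟨⟨g i, rfl⟩, ⟨g' i, rfl⟩⟩) ?_ i (Finset.mem_univ i)
    simpa using hgg'
  · rw [← LinearMap.range_eq_top, eq_top_iff, ← htop]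
    refine iSup_le fun i => ?_
    rintro _ ⟨w, rfl⟩
    exact ⟨Pi.single i w, LinearMap.lsum_piSingle _ _ _ _ _ _⟩

theorem exists_linearEquiv_pi_tensor {ι : Type*} [Fintype ι] [DecidableEq ι]
    {f : ι → W →ₗ[ℝ] V} (hf : ∀ i, Function.Injective (f i))
    (hind : iSupIndep fun i => LinearMap.range (f i)) (htop : ⨆ i, LinearMap.range (f i) = ⊤) :
    ∃ φ : ((ι → ℝ) ⊗[ℝ] W) ≃ₗ[ℝ] V, ∀ i w, φ (Pi.single i 1 ⊗ₜ w) = f i w :=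
  ⟨TensorProduct.comm ℝ _ _ ≪≫ₗ piScalarRight ℝ ℝ W ι ≪≫ₗ
    LinearEquiv.ofBijective _ (bijective_lsum_of_iSupIndep hf hind htop), fun i w => by simp⟩

theorem simplexSet_eq_stdSimplex (n : ℕ) : simplexSet n = stdSimplex ℝ (Fin n) := by
  rw [simplexSet, ← convexHull_basis_eq_stdSimplex]
  congr 1
  ext x
  simp only [mem_ofPred_eq, mem_range]
  constructor
  · rintro ⟨i, rfl⟩
    exact ⟨i, by funext j; simp [Pi.single_apply, eq_comm]⟩
  · rintro ⟨i, rfl⟩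
    exact ⟨i, by funext j; simp [Pi.single_apply, eq_comm]⟩

theorem minTensor_simplexSet_eq_convexHull (n : ℕ) (C : Set W) :
    minTensor (simplexSet n) C = convexHull ℝ (⋃ i, (Pi.single i 1 ⊗ₜ[ℝ] ·) '' C) := by
  refine (convexHull_min ?_ (convex_convexHull ℝ _)).antisymm (convexHull_mono ?_)
  · rintro _ ⟨a, ha, c, hc, rfl⟩
    rw [simplexSet_eq_stdSimplex] at ha
    have : a ⊗ₜ[ℝ] c = ∑ i, a i • (Pi.single i 1 ⊗ₜ[ℝ] c) := by
      simp_rw [TensorProduct.smul_tmul', ← TensorProduct.sum_tmul, ← Pi.single_smul', smul_eq_mul,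
        mul_one, Finset.univ_sum_single]
    rw [this]
    exact (convex_convexHull ℝ _).sum_mem (fun i _ => ha.1 i) ha.2
      fun i _ => subset_convexHull ℝ _ (mem_iUnion.2 ⟨i, c, hc, rfl⟩)
  · refine iUnion_subset fun i => ?_
    rintro _ ⟨c, hc, rfl⟩
    exact ⟨Pi.single i 1, subset_convexHull ℝ _ ⟨i, rfl⟩, c, hc, rfl⟩

theorem exists_linearEquiv_image_convexHull_eq_minTensor {n : ℕ} {f : Fin n → W →ₗ[ℝ] V}
    (hf : ∀ i, Function.Injective (f i)) (hind : iSupIndep fun i => LinearMap.range (f i))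
    (htop : ⨆ i, LinearMap.range (f i) = ⊤) (C : Set W) :
    ∃ φ : V ≃ₗ[ℝ] ((Fin n → ℝ) ⊗[ℝ] W),
      φ '' convexHull ℝ (⋃ i, f i '' C) = minTensor (simplexSet n) C := by
  obtain ⟨ψ, hψ⟩ := exists_linearEquiv_pi_tensor hf hind htop
  refine ⟨ψ.symm, ?_⟩
  rw [← LinearEquiv.coe_coe, LinearMap.image_convexHull, minTensor_simplexSet_eq_convexHull,
    image_iUnion]
  refine congrArg (convexHull ℝ) (iUnion_congr fun i => ?_)
  rw [image_image]
  refine image_congr fun w _ => ?_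
  simp [← hψ]

end Tensor

theorem IsClassicalDecomposition.exists_linearEquiv_image_eq_minTensor {V : Type*}
    [NormedAddCommGroup V] [NormedSpace ℝ V] [FiniteDimensional ℝ V] {S : Set V}
    (hSc : IsCompact S) (hspan : Submodule.span ℝ S = ⊤) {n : ℕ} {U : Fin n → Submodule ℝ V}
    (hU : IsClassicalDecomposition S U) {i₀ : Fin n} {T : Fin n → V ≃ₗ[ℝ] V}
    (hT : ∀ i, T i '' (S ∩ U i₀) = S ∩ U i) :
    ∃ (W : Type) (_ : NormedAddCommGroup W) (_ : NormedSpace ℝ W),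
      FiniteDimensional ℝ W ∧
      ∃ C : Set W, C.Nonempty ∧ IsCompact C ∧ Convex ℝ C ∧
        ∃ φ : V ≃ₗ[ℝ] ((Fin n → ℝ) ⊗[ℝ] W), φ '' S = minTensor (simplexSet n) C := by
  set E := Submodule.span ℝ (S ∩ U i₀)
  let j : (Fin (Module.finrank ℝ E) → ℝ) →ₗ[ℝ] V :=
    E.subtype ∘ₗ (Module.finBasis ℝ E).equivFun.symm.toLinearMap
  have hjker : LinearMap.ker j = ⊥ := LinearMap.ker_eq_bot.2
    (E.injective_subtype.comp (Module.finBasis ℝ E).equivFun.symm.injective)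
  have hjrange : LinearMap.range j = E := by simp [j, LinearMap.range_comp]
  have hjC : j '' (j ⁻¹' S) = S ∩ U i₀ := by
    rw [image_preimage_eq_inter_range, ← LinearMap.coe_range, hjrange]
    exact subset_antisymm (inter_subset_inter_right _ (Submodule.span_le.2 inter_subset_right))
      (subset_inter inter_subset_left Submodule.subset_span)
  have hrange : ∀ i, LinearMap.range ((T i : V →ₗ[ℝ] V) ∘ₗ j) = Submodule.span ℝ (S ∩ U i) := by
    intro i
    rw [LinearMap.range_comp, hjrange, Submodule.map_span, LinearEquiv.coe_coe, hT]
  obtain ⟨φ, hφ⟩ := exists_linearEquiv_image_convexHull_eq_minTensor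
    (f := fun i => (T i : V →ₗ[ℝ] V) ∘ₗ j)
    (fun i => (T i).injective.comp (LinearMap.ker_eq_bot.1 hjker))
    (hU.iSupIndep.mono fun i => (hrange i).trans_le (Submodule.span_le.2 inter_subset_right))
    (by simp_rw [hrange]; rw [← Submodule.span_iUnion, ← Submodule.span_convexHull,
      ← hU.eq_convexHull, hspan])
    (j ⁻¹' S)
  refine ⟨_, inferInstance, inferInstance, inferInstance, j ⁻¹' S, ?_,
    (j.isClosedEmbedding_of_injective hjker).isCompact_preimage hSc, hU.convex.linear_preimage j,
    φ, ?_⟩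
  · have h := hU.nonempty i₀
    rw [← hjC] at h
    exact h.of_image
  · rw [← hφ]
    refine congrArg _ (hU.eq_convexHull.trans (congrArg _ (iUnion_congr fun i => ?_)))
    rw [LinearMap.coe_comp, image_comp, hjC, LinearEquiv.coe_coe, hT]

theorem transitive_decomposable_has_classical_subsystem_general {V : Type*}
    [NormedAddCommGroup V] [NormedSpace ℝ V] [FiniteDimensional ℝ V]
    (S : Set V) (hSc : IsCompact S)
    (hspan : Submodule.span ℝ S = ⊤)
    (u : V →ₗ[ℝ] ℝ) (hu : ∀ s ∈ S, u s = 1)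
    (htrans : ∀ x ∈ Set.extremePoints ℝ S, ∀ y ∈ Set.extremePoints ℝ S,
      ∃ T : V ≃ₗ[ℝ] V, ⇑T '' S = S ∧ T x = y)
    (hdec : Decomposable S) :
    ∃ n : ℕ, 2 ≤ n ∧
      ∃ (W : Type) (_ : NormedAddCommGroup W) (_ : NormedSpace ℝ W),
        FiniteDimensional ℝ W ∧
        ∃ C : Set W, C.Nonempty ∧ IsCompact C ∧ Convex ℝ C ∧
          ∃ φ : V ≃ₗ[ℝ] ((Fin n → ℝ) ⊗[ℝ] W),
            ⇑φ '' S = minTensor (simplexSet n) C := by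
  obtain ⟨U₂, hU₂⟩ := hdec.exists_isClassicalDecomposition
  obtain ⟨n, U, hU, hmax⟩ := hU₂.exists_maximal hu
  have h2n : 2 ≤ n := hmax 2 U₂ hU₂
  have : Nontrivial (Fin n) := Fin.nontrivial_iff_two_le.2 h2n
  rw [← Fintype.card_fin n] at hmax
  let i₀ : Fin n := ⟨0, by omega⟩
  have hext : ∀ i, ∃ e, e ∈ (S ∩ U i).extremePoints ℝ := fun i =>
    (hSc.inter_right (U i).closed_of_finiteDimensional).extremePoints_nonempty (hU.nonempty i)
  choose e he using hext
  have hsymm : ∀ i, ∃ T : V ≃ₗ[ℝ] V, T '' (S ∩ U i₀) = S ∩ U i := fun i => by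
    obtain ⟨T, hTS, hTe⟩ := htrans (e i₀)
      ((hU.isExtreme hu i₀).extremePoints_subset_extremePoints (he i₀)) (e i)
      ((hU.isExtreme hu i).extremePoints_subset_extremePoints (he i))
    exact ⟨T, hU.image_eq_of_maximal hu hmax hTS (he i₀).1 (hTe ▸ (he i).1)⟩
  choose T hT using hsymm
  exact ⟨n, h2n, hU.exists_linearEquiv_image_eq_minTensor hSc hspan hT⟩

/-- Transitive state spaces with a classical degree of freedom have a classical subsystem:
`S ≅ Δ_{n-1} ⊠ C` for some `n ≥ 2` and some state space `C`. -/
theorem transitive_decomposable_has_classical_subsystem {V : Type*}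
    [NormedAddCommGroup V] [NormedSpace ℝ V] [FiniteDimensional ℝ V]
    (S : Set V) (hS : S.Nonempty) (hSc : IsCompact S) (hSv : Convex ℝ S)
    (hspan : Submodule.span ℝ S = ⊤)
    (u : V →ₗ[ℝ] ℝ) (hu : ∀ s ∈ S, u s = 1)
    (htrans : ∀ x ∈ Set.extremePoints ℝ S, ∀ y ∈ Set.extremePoints ℝ S,
      ∃ T : V ≃ₗ[ℝ] V, ⇑T '' S = S ∧ T x = y)
    (hdec : Decomposable S) :
    ∃ n : ℕ, 2 ≤ n ∧
      ∃ (W : Type) (_ : NormedAddCommGroup W) (_ : NormedSpace ℝ W),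
        FiniteDimensional ℝ W ∧
        ∃ C : Set W, C.Nonempty ∧ IsCompact C ∧ Convex ℝ C ∧
          ∃ φ : V ≃ₗ[ℝ] ((Fin n → ℝ) ⊗[ℝ] W),
            ⇑φ '' S = minTensor (simplexSet n) C :=
  transitive_decomposable_has_classical_subsystem_general S hSc hspan u hu htrans hdec
end
end

section
/- (The minimal tensor product contains no entangled pure states.) Let A ⊆ V and B ⊆ W be nonempty compact convex subsets of finite-dimensional real vector spaces, equipped with linear functionals u_A : V → ℝ and u_B : W → ℝ satisfying u_A(a) = 1 for all a ∈ A and u_B(b) = 1 for all b ∈ B. Then the set of extreme points of the minimal tensor product A ⊠ B is exactly {a ⊗ b : a is an extreme point of A and b is an extreme point of B}; in particular every pure (extreme) state of A ⊠ B is a product of pure states. -/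
/-!
Extreme points of a convex hull lie among its generators, so every pure state of `A ⊠ B` is a
product `a ⊗ b` of states. Contracting with the unit effects gives linear marginal maps
`A ⊠ B → A` and `A ⊠ B → B` that send `a ⊗ b` to `a` and to `b`. If `a` and `b` are pure,
the states of `A ⊠ B` with marginals `a` and `b` form a face; a face of a convex hull is
spanned by the generators it contains, and the only product state in this face is `a ⊗ b`,
so the face is `{a ⊗ b}`. Conversely, a segment through `a` in `A` tensored with `b` is a
segment through `a ⊗ b`, and it stays nondegenerate because the marginal map undoes `· ⊗ b`.
-/

open scoped TensorProduct

noncomputable section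

open Set

section Extreme

variable {𝕜 E F : Type*} [Field 𝕜] [LinearOrder 𝕜] [IsStrictOrderedRing 𝕜]
  [AddCommGroup E] [Module 𝕜 E] [AddCommGroup F] [Module 𝕜 F]

theorem IsExtreme.subset_convexHull_inter {S K : Set E} (h : IsExtreme 𝕜 (convexHull 𝕜 S) K) :
    K ⊆ convexHull 𝕜 (S ∩ K) := by
  -- by extremality of `K`, the points of the hull outside `K` or inside `convexHull 𝕜 (S ∩ K)` form a convex set
  suffices
      convexHull 𝕜 S ⊆ {z | z ∈ convexHull 𝕜 S ∧ (z ∈ K → z ∈ convexHull 𝕜 (S ∩ K))} from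
    fun z hz => (this (h.1 hz)).2 hz
  refine convexHull_min (fun x hx => ⟨subset_convexHull 𝕜 S hx,
    fun hxK => subset_convexHull 𝕜 _ ⟨hx, hxK⟩⟩) ?_
  rw [convex_iff_openSegment_subset]
  rintro x ⟨hx, hxK⟩ y ⟨hy, hyK⟩ z hz
  refine ⟨(convex_convexHull 𝕜 S).openSegment_subset hx hy hz, fun hzK => ?_⟩
  have hxK' := h.2 hx hy hzK hz
  have hyK' := h.2 hy hx hzK (openSegment_symm 𝕜 x y ▸ hz)
  exact (convex_convexHull 𝕜 _).openSegment_subset (hxK hxK') (hyK hyK') hz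

theorem LinearMap.mem_openSegment_map (f : E →ₗ[𝕜] F) {x y z : E}
    (hz : z ∈ openSegment 𝕜 x y) : f z ∈ openSegment 𝕜 (f x) (f y) :=
  image_openSegment 𝕜 f.toAffineMap x y ▸ mem_image_of_mem f hz

theorem isExtreme_inter_preimage_singleton (f : E →ₗ[𝕜] F) {C : Set E} {A : Set F}
    (hf : MapsTo f C A) {a : F} (ha : a ∈ A.extremePoints 𝕜) :
    IsExtreme 𝕜 C (C ∩ f ⁻¹' {a}) := by
  refine ⟨inter_subset_left, fun x hx y hy z ⟨_, hfz⟩ hxy => ⟨hx, ?_⟩⟩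
  rw [mem_preimage, mem_singleton_iff] at hfz ⊢
  exact ha.2 (hf hx) (hf hy) (hfz ▸ f.mem_openSegment_map hxy)

theorem mem_extremePoints_of_injOn (f : E →ₗ[𝕜] F) {A : Set E} {C : Set F}
    (hf : MapsTo f A C) (hinj : InjOn f A) {a : E} (ha : a ∈ A)
    (hfa : f a ∈ C.extremePoints 𝕜) : a ∈ A.extremePoints 𝕜 :=
  ⟨ha, fun _ hx _ hy hxy => hinj hx ha (hfa.2 (hf hx) (hf hy) (f.mem_openSegment_map hxy))⟩

end Extreme

section Marginal

variable {R V W : Type*} [CommSemiring R] [AddCommMonoid V] [Module R V]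
  [AddCommMonoid W] [Module R W]

def leftMarginal (u : W →ₗ[R] R) : V ⊗[R] W →ₗ[R] V :=
  TensorProduct.rid R V ∘ₗ u.lTensor V

def rightMarginal (u : V →ₗ[R] R) : V ⊗[R] W →ₗ[R] W :=
  TensorProduct.lid R W ∘ₗ u.rTensor W

@[simp]
theorem leftMarginal_tmul (u : W →ₗ[R] R) (v : V) (w : W) :
    leftMarginal u (v ⊗ₜ[R] w) = u w • v := by
  simp [leftMarginal]

@[simp]
theorem rightMarginal_tmul (u : V →ₗ[R] R) (v : V) (w : W) :
    rightMarginal u (v ⊗ₜ[R] w) = u v • w := by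
  simp [rightMarginal]

end Marginal

section MinTensor

variable {V W : Type*} [AddCommGroup V] [Module ℝ V] [AddCommGroup W] [Module ℝ W]
  {A : Set V} {B : Set W} {uA : V →ₗ[ℝ] ℝ} {uB : W →ₗ[ℝ] ℝ}

theorem tmul_mem_minTensor {a : V} {b : W} (ha : a ∈ A) (hb : b ∈ B) :
    a ⊗ₜ[ℝ] b ∈ minTensor A B :=
  subset_convexHull ℝ _ ⟨a, ha, b, hb, rfl⟩

theorem mapsTo_leftMarginal_minTensor (hA : Convex ℝ A) (huB : ∀ b ∈ B, uB b = 1) :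
    MapsTo (leftMarginal uB) (minTensor A B) A :=
  convexHull_min (fun _ ⟨a, ha, b, hb, h⟩ => show leftMarginal uB _ ∈ A by
    rwa [h, leftMarginal_tmul, huB b hb, one_smul]) (hA.linear_preimage _)

theorem mapsTo_rightMarginal_minTensor (hB : Convex ℝ B) (huA : ∀ a ∈ A, uA a = 1) :
    MapsTo (rightMarginal uA) (minTensor A B) B :=
  convexHull_min (fun _ ⟨a, ha, b, hb, h⟩ => show rightMarginal uA _ ∈ B by
    rwa [h, rightMarginal_tmul, huA a ha, one_smul]) (hB.linear_preimage _)

theorem tmul_mem_extremePoints_minTensor_iff (hA : Convex ℝ A) (hB : Convex ℝ B)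
    (huA : ∀ a ∈ A, uA a = 1) (huB : ∀ b ∈ B, uB b = 1) {a : V} {b : W} (ha : a ∈ A)
    (hb : b ∈ B) :
    a ⊗ₜ[ℝ] b ∈ (minTensor A B).extremePoints ℝ ↔
      a ∈ A.extremePoints ℝ ∧ b ∈ B.extremePoints ℝ := by
  constructor
  · intro hab
    refine ⟨mem_extremePoints_of_injOn ((TensorProduct.mk ℝ V W).flip b)
        (fun a' ha' => tmul_mem_minTensor ha' hb) ?_ ha hab,
      mem_extremePoints_of_injOn (TensorProduct.mk ℝ V W a)
        (fun b' hb' => tmul_mem_minTensor ha hb') ?_ hb hab⟩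
    · exact LeftInvOn.injOn (f₁' := leftMarginal uB) fun a' _ => by simp [huB b hb]
    · exact LeftInvOn.injOn (f₁' := rightMarginal uA) fun b' _ => by simp [huA a ha]
  · rintro ⟨haE, hbE⟩
    set K := minTensor A B ∩ leftMarginal uB ⁻¹' {a} ∩
      (minTensor A B ∩ rightMarginal uA ⁻¹' {b})
    have hK : IsExtreme ℝ (minTensor A B) K :=
      (isExtreme_inter_preimage_singleton _ (mapsTo_leftMarginal_minTensor hA huB) haE).inter
        (isExtreme_inter_preimage_singleton _ (mapsTo_rightMarginal_minTensor hB huA) hbE)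
    have hK_sub : K ⊆ {a ⊗ₜ[ℝ] b} := by
      refine hK.subset_convexHull_inter.trans (convexHull_min ?_ (convex_singleton _))
      rintro _ ⟨⟨a', ha', b', hb', rfl⟩, ⟨_, ha'a⟩, ⟨_, hb'b⟩⟩
      simp only [mem_preimage, leftMarginal_tmul, rightMarginal_tmul, huB b' hb', huA a' ha',
        one_smul, mem_singleton_iff] at ha'a hb'b ⊢
      rw [ha'a, hb'b]
    have hab : a ⊗ₜ[ℝ] b ∈ K :=
      ⟨⟨tmul_mem_minTensor ha hb, by simp [huB b hb]⟩,
        tmul_mem_minTensor ha hb, by simp [huA a ha]⟩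
    rw [← isExtreme_singleton, ← (Nonempty.subset_singleton_iff ⟨_, hab⟩).1 hK_sub]
    exact hK

end MinTensor

theorem minTensor_extremePoints_general {V W : Type*}
    [NormedAddCommGroup V] [NormedSpace ℝ V]
    [NormedAddCommGroup W] [NormedSpace ℝ W]
    (A : Set V) (hAv : Convex ℝ A)
    (B : Set W) (hBv : Convex ℝ B)
    (uA : V →ₗ[ℝ] ℝ) (huA : ∀ a ∈ A, uA a = 1)
    (uB : W →ₗ[ℝ] ℝ) (huB : ∀ b ∈ B, uB b = 1) :
    Set.extremePoints ℝ (minTensor A B) =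
      {x : V ⊗[ℝ] W | ∃ a ∈ Set.extremePoints ℝ A, ∃ b ∈ Set.extremePoints ℝ B,
        x = a ⊗ₜ[ℝ] b} := by
  ext x
  constructor
  · intro hx
    obtain ⟨a, ha, b, hb, rfl⟩ := extremePoints_convexHull_subset hx
    obtain ⟨haE, hbE⟩ := (tmul_mem_extremePoints_minTensor_iff hAv hBv huA huB ha hb).1 hx
    exact ⟨a, haE, b, hbE, rfl⟩
  · rintro ⟨a, haE, b, hbE, rfl⟩
    exact (tmul_mem_extremePoints_minTensor_iff hAv hBv huA huB haE.1 hbE.1).2 ⟨haE, hbE⟩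

/-- The minimal tensor product contains no entangled pure states: the extreme points of
`A ⊠ B` are exactly the products of extreme points of `A` and of `B`. -/
theorem minTensor_extremePoints {V W : Type*}
    [NormedAddCommGroup V] [NormedSpace ℝ V] [FiniteDimensional ℝ V]
    [NormedAddCommGroup W] [NormedSpace ℝ W] [FiniteDimensional ℝ W]
    (A : Set V) (hA : A.Nonempty) (hAc : IsCompact A) (hAv : Convex ℝ A)
    (B : Set W) (hB : B.Nonempty) (hBc : IsCompact B) (hBv : Convex ℝ B)
    (uA : V →ₗ[ℝ] ℝ) (huA : ∀ a ∈ A, uA a = 1)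
    (uB : W →ₗ[ℝ] ℝ) (huB : ∀ b ∈ B, uB b = 1) :
    Set.extremePoints ℝ (minTensor A B) =
      {x : V ⊗[ℝ] W | ∃ a ∈ Set.extremePoints ℝ A, ∃ b ∈ Set.extremePoints ℝ B,
        x = a ⊗ₜ[ℝ] b} :=
  minTensor_extremePoints_general A hAv B hBv uA huA uB huB
end
end

section
/- (Local reversible interactions allow for the construction of partial broadcasters.) Let A ⊆ V and B ⊆ W be normalized state spaces with unit effects u_A, u_B, and let T be a locally reversible interaction of A and B with associated families X_b (b ∈ B) and Y_a (a ∈ A). Then for each fixed b ∈ B the linear map G_b : V → V ⊗ W defined by G_b(v) = (X_b⁻¹ ⊗ id_W)(T(v ⊗ b)) is a partial broadcaster: G_b(A) ⊆ A ⊠ B and (id_V ⊗ u_B)(G_b(a)) = a for every a ∈ A. -/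
open scoped TensorProduct

noncomputable section

/-- The marginal map `id_V ⊗ e : V ⊗ W → V`, determined by `v ⊗ w ↦ e(w) • v`. -/
def marginal {V W : Type*} [AddCommGroup V] [Module ℝ V] [AddCommGroup W] [Module ℝ W]
    (e : W →ₗ[ℝ] ℝ) : (V ⊗[ℝ] W) →ₗ[ℝ] V :=
  (TensorProduct.rid ℝ V).toLinearMap.comp (TensorProduct.map LinearMap.id e)

/-- Local reversible interactions allow for the construction of partial broadcasters:
for each `b ∈ B`, the map `G_b(v) = (X_b⁻¹ ⊗ id)(T(v ⊗ b))` maps `A` into `A ⊠ B` and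
has `A`-marginal equal to the identity on `A`. -/
theorem locally_reversible_interaction_gives_partial_broadcaster {V W : Type*}
    [NormedAddCommGroup V] [NormedSpace ℝ V] [FiniteDimensional ℝ V]
    [NormedAddCommGroup W] [NormedSpace ℝ W] [FiniteDimensional ℝ W]
    (A : Set V) (hA : A.Nonempty) (hAc : IsCompact A) (hAv : Convex ℝ A)
    (B : Set W) (hB : B.Nonempty) (hBc : IsCompact B) (hBv : Convex ℝ B)
    (uA : V →ₗ[ℝ] ℝ) (huA : ∀ a ∈ A, uA a = 1)
    (uB : W →ₗ[ℝ] ℝ) (huB : ∀ b ∈ B, uB b = 1)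
    (T : (V ⊗[ℝ] W) ≃ₗ[ℝ] (V ⊗[ℝ] W))
    (X : W → (V ≃ₗ[ℝ] V)) (Y : V → (W ≃ₗ[ℝ] W))
    (hX : ∀ b ∈ B, ⇑(X b) '' A = A) (hY : ∀ a ∈ A, ⇑(Y a) '' B = B)
    (hT : ∀ a ∈ A, ∀ b ∈ B, T (a ⊗ₜ[ℝ] b) = (X b a) ⊗ₜ[ℝ] (Y a b))
    (b : W) (hb : b ∈ B) :
    (∀ a ∈ A,
      TensorProduct.map ((X b).symm.toLinearMap) LinearMap.id (T (a ⊗ₜ[ℝ] b))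
        ∈ minTensor A B) ∧
    (∀ a ∈ A,
      marginal uB
        (TensorProduct.map ((X b).symm.toLinearMap) LinearMap.id (T (a ⊗ₜ[ℝ] b))) = a) := by
  have key : ∀ a ∈ A,
      TensorProduct.map ((X b).symm.toLinearMap) LinearMap.id (T (a ⊗ₜ[ℝ] b))
        = a ⊗ₜ[ℝ] (Y a b) := by
    intro a ha
    rw [hT a ha b hb, TensorProduct.map_tmul]
    simp
  have hYb : ∀ a ∈ A, Y a b ∈ B := by
    intro a ha
    rw [← hY a ha]
    exact ⟨b, hb, rfl⟩
  constructor
  · intro a ha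
    rw [key a ha]
    exact subset_convexHull ℝ _ ⟨a, ha, Y a b, hYb a ha, rfl⟩
  · intro a ha
    rw [key a ha]
    simp [marginal, huB _ (hYb a ha)]
end
end

section
/- Let A ⊆ V and B ⊆ W be normalized state spaces with unit effects u_A, u_B. Let x ∈ A ⊠ B and suppose its A-marginal (id_V ⊗ u_B)(x) equals s, where s is an extreme point of A. Then there exists y ∈ B such that x = s ⊗ y; that is, states of the minimal tensor product with a pure marginal are product states. -/
open scoped TensorProduct

noncomputable section

/-! States of `A ⊠ B` are convex combinations of product states `a ⊗ b`, and the marginal maps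
`a ⊗ b` to `a ∈ A`. Since `s` is extreme in `A`, a convex combination can only have marginal `s`
if every product state it uses has marginal `s`, i.e. is of the form `s ⊗ b`; and the convex
combinations of the `s ⊗ b` with `b ∈ B` are again of this form because `B` is convex. -/

theorem IsExtreme.convexHull_inter_preimage_subset {𝕜 E P : Type*} [Field 𝕜] [LinearOrder 𝕜]
    [IsStrictOrderedRing 𝕜] [AddCommGroup E] [Module 𝕜 E] [AddCommGroup P] [Module 𝕜 P]
    {A F : Set P} {G : Set E} (hF : IsExtreme 𝕜 A F) (hA : Convex 𝕜 A) (f : E →ᵃ[𝕜] P)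
    (hGA : Set.MapsTo f G A) :
    convexHull 𝕜 G ∩ f ⁻¹' F ⊆ convexHull 𝕜 (G ∩ f ⁻¹' F) := by
  have hhull : convexHull 𝕜 G ⊆ f ⁻¹' A := convexHull_min hGA (hA.affine_preimage f)
  suffices hC : Convex 𝕜 {x ∈ convexHull 𝕜 G | f x ∈ F → x ∈ convexHull 𝕜 (G ∩ f ⁻¹' F)} by
    rintro x ⟨hxG, hxF⟩
    refine (convexHull_min ?_ hC hxG).2 hxF
    exact fun y hy => ⟨subset_convexHull 𝕜 G hy, fun hyF => subset_convexHull 𝕜 _ ⟨hy, hyF⟩⟩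
  rw [convex_iff_openSegment_subset]
  rintro x ⟨hxG, hxF⟩ y ⟨hyG, hyF⟩ z hz
  refine ⟨convex_iff_openSegment_subset.1 (convex_convexHull 𝕜 G) hxG hyG hz, fun hzF => ?_⟩
  have hfz : f z ∈ openSegment 𝕜 (f x) (f y) :=
    image_openSegment 𝕜 f x y ▸ Set.mem_image_of_mem f hz
  exact convex_iff_openSegment_subset.1 (convex_convexHull 𝕜 _)
    (hxF (hF.left_mem_of_mem_openSegment (hhull hxG) (hhull hyG) hzF hfz))
    (hyF (hF.right_mem_of_mem_openSegment (hhull hxG) (hhull hyG) hzF hfz)) hz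

theorem marginal_tmul {V W : Type*} [AddCommGroup V] [Module ℝ V] [AddCommGroup W] [Module ℝ W]
    (e : W →ₗ[ℝ] ℝ) (v : V) (w : W) : marginal e (v ⊗ₜ[ℝ] w) = e w • v := by
  simp [marginal]

theorem pure_marginal_implies_product_general {V W : Type*}
    [NormedAddCommGroup V] [NormedSpace ℝ V]
    [NormedAddCommGroup W] [NormedSpace ℝ W]
    (A : Set V) (hAv : Convex ℝ A)
    (B : Set W) (hBv : Convex ℝ B)
    (uB : W →ₗ[ℝ] ℝ) (huB : ∀ b ∈ B, uB b = 1)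
    (x : V ⊗[ℝ] W) (hx : x ∈ minTensor A B)
    (s : V) (hs : s ∈ Set.extremePoints ℝ A)
    (hmarg : marginal uB x = s) :
    ∃ y ∈ B, x = s ⊗ₜ[ℝ] y := by
  set G := {x : V ⊗[ℝ] W | ∃ a ∈ A, ∃ b ∈ B, x = a ⊗ₜ[ℝ] b}
  have hGA : Set.MapsTo (marginal uB).toAffineMap G A := by
    rintro _ ⟨a, ha, b, hb, rfl⟩
    simpa [marginal_tmul, huB b hb] using ha
  have hxs : x ∈ convexHull ℝ (G ∩ (marginal uB).toAffineMap ⁻¹' {s}) :=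
    (isExtreme_singleton.2 hs).convexHull_inter_preimage_subset hAv _ hGA ⟨hx, hmarg⟩
  have hGs : G ∩ (marginal uB).toAffineMap ⁻¹' {s} ⊆ TensorProduct.mk ℝ V W s '' B := by
    rintro _ ⟨⟨a, -, b, hb, rfl⟩, hab⟩
    have ha : a = s := by simpa [marginal_tmul, huB b hb] using hab
    exact ⟨b, hb, by simp [ha]⟩
  obtain ⟨y, hy, rfl⟩ := convexHull_min hGs (hBv.linear_image _) hxs
  exact ⟨y, hy, rfl⟩

/-- States of the minimal tensor product with a pure marginal are product states. -/
theorem pure_marginal_implies_product {V W : Type*}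
    [NormedAddCommGroup V] [NormedSpace ℝ V] [FiniteDimensional ℝ V]
    [NormedAddCommGroup W] [NormedSpace ℝ W] [FiniteDimensional ℝ W]
    (A : Set V) (hA : A.Nonempty) (hAc : IsCompact A) (hAv : Convex ℝ A)
    (B : Set W) (hB : B.Nonempty) (hBc : IsCompact B) (hBv : Convex ℝ B)
    (uA : V →ₗ[ℝ] ℝ) (huA : ∀ a ∈ A, uA a = 1)
    (uB : W →ₗ[ℝ] ℝ) (huB : ∀ b ∈ B, uB b = 1)
    (x : V ⊗[ℝ] W) (hx : x ∈ minTensor A B)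
    (s : V) (hs : s ∈ Set.extremePoints ℝ A)
    (hmarg : marginal uB x = s) :
    ∃ y ∈ B, x = s ⊗ₜ[ℝ] y :=
  pure_marginal_implies_product_general A hAv B hBv uB huB x hx s hs hmarg
end
end

section
/- (Non-trivial non-disturbing measurements imply decomposability of the state space.) Let A be a nonempty compact convex subset of a finite-dimensional real vector space V equipped with a linear functional u : V → ℝ with u(a) = 1 for all a ∈ A. Let M : V → V be a linear map such that every extreme point s of A is an eigenvector of M, i.e. M(s) = c(s)·s for some scalar c(s) ∈ ℝ, and suppose M is non-trivial on A in the sense that there are extreme points s₁, s₂ of A with c(s₁) ≠ c(s₂). Then A is decomposable: there exist nonempty compact convex subsets A₁, A₂ ⊆ V whose linear spans intersect only in 0 such that A = convexHull(A₁ ∪ A₂). -/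
noncomputable section

open Set

private lemma convexJoin_isCompact {V : Type*} [NormedAddCommGroup V] [NormedSpace ℝ V]
    (s t : Set V) (hs : IsCompact s) (ht : IsCompact t) : IsCompact (convexJoin ℝ s t) := by
  have : convexJoin ℝ s t =
      (fun p : ℝ × V × V => (1 - p.1) • p.2.1 + p.1 • p.2.2) '' (Icc (0:ℝ) 1 ×ˢ s ×ˢ t) := by
    ext x
    simp only [mem_convexJoin, Set.mem_image, Set.mem_prod, Prod.exists]
    constructor
    · rintro ⟨a, ha, b, hb, hx⟩
      rw [segment_eq_image] at hx
      obtain ⟨θ, hθ, rfl⟩ := hx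
      exact ⟨θ, a, b, ⟨hθ, ha, hb⟩, rfl⟩
    · rintro ⟨θ, a, b, ⟨hθ, ha, hb⟩, rfl⟩
      exact ⟨a, ha, b, hb, segment_eq_image ℝ a b ▸ Set.mem_image_of_mem _ hθ⟩
  rw [this]
  exact ((isCompact_Icc.prod (hs.prod ht)).image (by fun_prop))


/-- Non-trivial non-disturbing measurements imply decomposability of the state space. -/
theorem nondisturbing_measurement_implies_decomposable {V : Type*}
    [NormedAddCommGroup V] [NormedSpace ℝ V] [FiniteDimensional ℝ V]
    (A : Set V) (hA : A.Nonempty) (hAc : IsCompact A) (hAv : Convex ℝ A)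
    (u : V →ₗ[ℝ] ℝ) (hu : ∀ a ∈ A, u a = 1)
    (M : V →ₗ[ℝ] V) (c : V → ℝ)
    (hM : ∀ s ∈ Set.extremePoints ℝ A, M s = c s • s)
    (hnontriv : ∃ s₁ ∈ Set.extremePoints ℝ A, ∃ s₂ ∈ Set.extremePoints ℝ A,
      c s₁ ≠ c s₂) :
    Decomposable A := by
  classical
  obtain ⟨s₁, hs₁, s₂, hs₂, hne⟩ := hnontriv
  -- extreme points are nonzero
  have hnz : ∀ s ∈ Set.extremePoints ℝ A, s ≠ 0 := by
    intro s hs h0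
    have := hu s (extremePoints_subset hs)
    rw [h0, map_zero] at this
    exact one_ne_zero this.symm
  -- eigenspace membership for extreme points
  have heig : ∀ s ∈ Set.extremePoints ℝ A, s ∈ Module.End.eigenspace M (c s) := by
    intro s hs
    rw [Module.End.mem_eigenspace_iff]
    exact hM s hs
  set E : Submodule ℝ V := Module.End.eigenspace M (c s₁) with hE
  set P₁ : Set V := Set.extremePoints ℝ A ∩ E with hP₁
  set P₂ : Set V := Set.extremePoints ℝ A \ E with hP₂
  set A₁ : Set V := closure (convexHull ℝ P₁) with hA₁
  set A₂ : Set V := closure (convexHull ℝ P₂) with hA₂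
  have hP₁A : P₁ ⊆ A := fun x hx => extremePoints_subset hx.1
  have hP₂A : P₂ ⊆ A := fun x hx => extremePoints_subset hx.1
  have hA₁A : A₁ ⊆ A :=
    closure_minimal (convexHull_min hP₁A hAv) hAc.isClosed
  have hA₂A : A₂ ⊆ A :=
    closure_minimal (convexHull_min hP₂A hAv) hAc.isClosed
  -- compactness
  have hbdd : Bornology.IsBounded A := hAc.isBounded
  have hA₁c : IsCompact A₁ :=
    ((hbdd.subset (convexHull_min hP₁A hAv)).isCompact_closure)
  have hA₂c : IsCompact A₂ :=
    ((hbdd.subset (convexHull_min hP₂A hAv)).isCompact_closure)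
  -- spans
  have hspan₁ : Submodule.span ℝ A₁ ≤ E := by
    rw [Submodule.span_le]
    exact closure_minimal (convexHull_min (fun x hx => hx.2) E.convex)
      (Submodule.closed_of_finiteDimensional E)
  set F : Submodule ℝ V := ⨆ μ ∈ {μ : ℝ | μ ≠ c s₁}, Module.End.eigenspace M μ with hF
  have hspan₂ : Submodule.span ℝ A₂ ≤ F := by
    rw [Submodule.span_le]
    refine closure_minimal (convexHull_min ?_ F.convex)
      (Submodule.closed_of_finiteDimensional F)
    intro x hx
    have hxc : c x ≠ c s₁ := by
      intro h
      apply hx.2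
      show x ∈ (E : Set V)
      rw [hE, ← h]
      exact heig x hx.1
    refine Submodule.mem_iSup_of_mem (c x) ?_
    exact Submodule.mem_iSup_of_mem hxc (heig x hx.1)
  have hdisj : Disjoint E F := Module.End.eigenspaces_iSupIndep M (c s₁)
  have hs₂E : s₂ ∉ (E : Set V) := by
    intro hmem
    have hmem' : M s₂ = c s₁ • s₂ := Module.End.mem_eigenspace_iff.mp hmem
    rw [hM s₂ hs₂] at hmem'
    have : (c s₂ - c s₁) • s₂ = 0 := by rw [sub_smul, hmem', sub_self]
    rcases smul_eq_zero.mp this with h | h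
    · exact hne (by linarith [sub_eq_zero.mp h])
    · exact hnz s₂ hs₂ h
  have hs₂' : s₂ ∈ A₂ := subset_closure (subset_convexHull ℝ _ ⟨hs₂, hs₂E⟩)
  refine ⟨A₁, A₂, ⟨s₁, subset_closure (subset_convexHull ℝ _ ⟨hs₁, heig s₁ hs₁⟩)⟩,
    hA₁c, (convex_convexHull ℝ P₁).closure, ?_, hA₂c, (convex_convexHull ℝ P₂).closure,
    ?_, ?_⟩
  · exact ⟨s₂, hs₂'⟩
  · exact le_bot_iff.mp (fun x hx =>
      (hdisj.le_bot ⟨hspan₁ hx.1, hspan₂ hx.2⟩))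
  · -- A = convexHull (A₁ ∪ A₂)
    apply Subset.antisymm
    · -- use Krein-Milman
      have hKM := closure_convexHull_extremePoints hAc hAv
      have hsub : convexHull ℝ (Set.extremePoints ℝ A) ⊆ convexHull ℝ (A₁ ∪ A₂) := by
        apply convexHull_mono
        intro x hx
        by_cases hxE : x ∈ E
        · exact Or.inl (subset_closure (subset_convexHull ℝ _ ⟨hx, hxE⟩))
        · exact Or.inr (subset_closure (subset_convexHull ℝ _ ⟨hx, hxE⟩))
      have hne₁ : A₁.Nonempty := ⟨s₁, subset_closure (subset_convexHull ℝ _ ⟨hs₁, heig s₁ hs₁⟩)⟩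
      have hne₂ : A₂.Nonempty := ⟨s₂, hs₂'⟩
      have hclosed : IsClosed (convexHull ℝ (A₁ ∪ A₂)) := by
        rw [((convex_convexHull ℝ P₁).closure).convexHull_union
          ((convex_convexHull ℝ P₂).closure) hne₁ hne₂]
        exact (convexJoin_isCompact A₁ A₂ hA₁c hA₂c).isClosed
      calc A = closure (convexHull ℝ (Set.extremePoints ℝ A)) := hKM.symm
        _ ⊆ closure (convexHull ℝ (A₁ ∪ A₂)) := closure_mono hsub
        _ = convexHull ℝ (A₁ ∪ A₂) := hclosed.closure_eq
    · exact convexHull_min (union_subset hA₁A hA₂A) hAv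
end
end

section
/- (For theories without entanglement with entirely non-classical state spaces, all local reversible interactions are trivial.) Let A ⊆ V and B ⊆ W be normalized state spaces with unit effects u_A, u_B, and assume both A and B are indecomposable. Let T be a locally reversible interaction of A and B: a linear automorphism T of V ⊗ W together with reversible transformations X_b of A (for each b ∈ B) and Y_a of B (for each a ∈ A) satisfying T(a ⊗ b) = (X_b a) ⊗ (Y_a b) for all a ∈ A and b ∈ B. Then T is a trivial interaction: there exist reversible transformations X of A and Y of B such that T(a ⊗ b) = (X a) ⊗ (Y b) for all a ∈ A and b ∈ B. -/
open scoped TensorProduct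

noncomputable section

private lemma dual_exists_aux {V : Type*} [AddCommGroup V] [Module ℝ V]
    (p q : V) (hp : p ∉ Submodule.span ℝ {q}) :
    ∃ f : V →ₗ[ℝ] ℝ, f p = 1 ∧ f q = 0 := by
  set N := Submodule.span ℝ {q} with hN
  have hmk : (N.mkQ p) ≠ 0 := by
    simpa [Submodule.Quotient.mk_eq_zero] using hp
  obtain ⟨φ, hφ⟩ : ∃ φ : Module.Dual ℝ (V ⧸ N), φ (N.mkQ p) ≠ 0 := by
    by_contra hcon
    push_neg at hcon
    exact hmk ((Module.forall_dual_apply_eq_zero_iff ℝ _).mp hcon)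
  refine ⟨(φ (N.mkQ p))⁻¹ • (φ ∘ₗ N.mkQ), ?_, ?_⟩
  · simp only [LinearMap.smul_apply, LinearMap.coe_comp, Function.comp_apply, smul_eq_mul]
    exact inv_mul_cancel₀ hφ
  · have hq : N.mkQ q = 0 := by
      simp [Submodule.Quotient.mk_eq_zero, hN, Submodule.mem_span_singleton_self]
    simp [hq]

private lemma tensor_aux_left {V W : Type*} [AddCommGroup V] [Module ℝ V]
    [AddCommGroup W] [Module ℝ W]
    {p q x₃ : V} {y₁ y₂ y₃ : W}
    (h : p ⊗ₜ[ℝ] y₁ + q ⊗ₜ[ℝ] y₂ = x₃ ⊗ₜ[ℝ] y₃)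
    (hp : p ∉ Submodule.span ℝ {q}) :
    ∃ c : ℝ, y₁ = c • y₃ := by
  obtain ⟨f, hf1, hf0⟩ := dual_exists_aux p q hp
  have happ := congrArg (fun z => (TensorProduct.lid ℝ W) ((LinearMap.rTensor W f) z)) h
  simp only [map_add, LinearMap.rTensor_tmul, TensorProduct.lid_tmul, hf1, hf0,
    one_smul, zero_smul, add_zero] at happ
  exact ⟨f x₃, happ⟩

private lemma tensor_aux_right {V W : Type*} [AddCommGroup V] [Module ℝ V]
    [AddCommGroup W] [Module ℝ W]
    {x₁ x₂ x₃ : V} {p q y₃ : W}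
    (h : x₁ ⊗ₜ[ℝ] p + x₂ ⊗ₜ[ℝ] q = x₃ ⊗ₜ[ℝ] y₃)
    (hp : p ∉ Submodule.span ℝ {q}) :
    ∃ c : ℝ, x₁ = c • x₃ := by
  obtain ⟨f, hf1, hf0⟩ := dual_exists_aux p q hp
  have happ := congrArg (fun z => (TensorProduct.rid ℝ V) ((LinearMap.lTensor V f) z)) h
  simp only [map_add, LinearMap.lTensor_tmul, TensorProduct.rid_tmul, hf1, hf0,
    one_smul, zero_smul, add_zero] at happ
  exact ⟨f y₃, happ⟩

/-- For theories without entanglement with entirely non-classical (indecomposable) state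
spaces, all locally reversible interactions are trivial: `T(a ⊗ b) = (X a) ⊗ (Y b)` for
fixed reversible transformations `X` and `Y`. -/
theorem indecomposable_locally_reversible_interaction_is_trivial {V W : Type*}
    [NormedAddCommGroup V] [NormedSpace ℝ V] [FiniteDimensional ℝ V]
    [NormedAddCommGroup W] [NormedSpace ℝ W] [FiniteDimensional ℝ W]
    (A : Set V) (hA : A.Nonempty) (hAc : IsCompact A) (hAv : Convex ℝ A)
    (B : Set W) (hB : B.Nonempty) (hBc : IsCompact B) (hBv : Convex ℝ B)
    (uA : V →ₗ[ℝ] ℝ) (huA : ∀ a ∈ A, uA a = 1)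
    (uB : W →ₗ[ℝ] ℝ) (huB : ∀ b ∈ B, uB b = 1)
    (hAind : ¬ Decomposable A) (hBind : ¬ Decomposable B)
    (T : (V ⊗[ℝ] W) ≃ₗ[ℝ] (V ⊗[ℝ] W))
    (X : W → (V ≃ₗ[ℝ] V)) (Y : V → (W ≃ₗ[ℝ] W))
    (hX : ∀ b ∈ B, ⇑(X b) '' A = A) (hY : ∀ a ∈ A, ⇑(Y a) '' B = B)
    (hT : ∀ a ∈ A, ∀ b ∈ B, T (a ⊗ₜ[ℝ] b) = (X b a) ⊗ₜ[ℝ] (Y a b)) :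
    ∃ X' : V ≃ₗ[ℝ] V, ⇑X' '' A = A ∧
      ∃ Y' : W ≃ₗ[ℝ] W, ⇑Y' '' B = B ∧
        ∀ a ∈ A, ∀ b ∈ B, T (a ⊗ₜ[ℝ] b) = (X' a) ⊗ₜ[ℝ] (Y' b) := by
  obtain ⟨a₀, ha₀⟩ := hA
  obtain ⟨b₀, hb₀⟩ := hB
  have memXA : ∀ b ∈ B, ∀ a ∈ A, X b a ∈ A := by
    intro b hb a ha
    rw [← hX b hb]
    exact Set.mem_image_of_mem _ ha
  have memYB : ∀ a ∈ A, ∀ b ∈ B, Y a b ∈ B := by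
    intro a ha b hb
    rw [← hY a ha]
    exact Set.mem_image_of_mem _ hb
  -- distinct normalized states are not proportional
  have spanA : ∀ p ∈ A, ∀ q ∈ A, p ≠ q → p ∉ Submodule.span ℝ {q} := by
    intro p hp q hq hne hmem
    obtain ⟨c, hc⟩ := Submodule.mem_span_singleton.mp hmem
    have h1 : uA p = 1 := huA p hp
    have h2 : uA q = 1 := huA q hq
    have hc1 : c = 1 := by
      have := congrArg uA hc
      rw [map_smul, h2, h1, smul_eq_mul, mul_one] at this
      exact this
    exact hne (by rw [← hc, hc1, one_smul])
  have spanB : ∀ p ∈ B, ∀ q ∈ B, p ≠ q → p ∉ Submodule.span ℝ {q} := by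
    intro p hp q hq hne hmem
    obtain ⟨c, hc⟩ := Submodule.mem_span_singleton.mp hmem
    have h1 : uB p = 1 := huB p hp
    have h2 : uB q = 1 := huB q hq
    have hc1 : c = 1 := by
      have := congrArg uB hc
      rw [map_smul, h2, h1, smul_eq_mul, mul_one] at this
      exact this
    exact hne (by rw [← hc, hc1, one_smul])
  -- the Y transformations agree on B
  have claimY : ∀ a ∈ A, ∀ b ∈ B, Y a b = Y a₀ b := by
    intro a ha b hb
    rcases eq_or_ne a a₀ with rfl | hne
    · rfl
    set m := (2:ℝ)⁻¹ • (a + a₀) with hm_def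
    have hmA : m ∈ A := by
      have := hAv ha ha₀ (by norm_num : (0:ℝ) ≤ 2⁻¹) (by norm_num : (0:ℝ) ≤ 2⁻¹)
        (by norm_num : (2:ℝ)⁻¹ + 2⁻¹ = 1)
      simpa [hm_def, smul_add] using this
    have hsum : a + a₀ = (2:ℝ) • m := (smul_inv_smul₀ (by norm_num) _).symm
    have heq : (X b a) ⊗ₜ[ℝ] (Y a b) + (X b a₀) ⊗ₜ[ℝ] (Y a₀ b)
        = ((2:ℝ) • X b m) ⊗ₜ[ℝ] (Y m b) := by
      calc (X b a) ⊗ₜ[ℝ] (Y a b) + (X b a₀) ⊗ₜ[ℝ] (Y a₀ b)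
          = T (a ⊗ₜ b) + T (a₀ ⊗ₜ b) := by rw [hT a ha b hb, hT a₀ ha₀ b hb]
        _ = T ((a + a₀) ⊗ₜ b) := by rw [← map_add, ← TensorProduct.add_tmul]
        _ = (2:ℝ) • T (m ⊗ₜ b) := by rw [hsum, ← TensorProduct.smul_tmul', map_smul]
        _ = ((2:ℝ) • X b m) ⊗ₜ[ℝ] (Y m b) := by
              rw [hT m hmA b hb, TensorProduct.smul_tmul']
    have step : ∀ a' ∈ A, ∀ a'' ∈ A,
        (X b a') ⊗ₜ[ℝ] (Y a' b) + (X b a'') ⊗ₜ[ℝ] (Y a'' b)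
          = ((2:ℝ) • X b m) ⊗ₜ[ℝ] (Y m b) → a' ≠ a'' → Y a' b = Y m b := by
      intro a' ha' a'' ha'' heq' hne'
      have hsp : X b a' ∉ Submodule.span ℝ {X b a''} := by
        apply spanA _ (memXA b hb a' ha') _ (memXA b hb a'' ha'')
        exact fun hEq => hne' ((X b).injective hEq)
      obtain ⟨c, hc⟩ := tensor_aux_left heq' hsp
      have hc1 : c = 1 := by
        have := congrArg uB hc
        rw [huB _ (memYB a' ha' b hb), map_smul, huB _ (memYB m hmA b hb),
          smul_eq_mul, mul_one] at this
        exact this.symm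
      rw [hc, hc1, one_smul]
    have h1 : Y a b = Y m b := step a ha a₀ ha₀ heq hne
    have h2 : Y a₀ b = Y m b := by
      refine step a₀ ha₀ a ha ?_ (Ne.symm hne)
      rw [add_comm]; exact heq
    exact h1.trans h2.symm
  -- the X transformations agree on A
  have claimX : ∀ b ∈ B, ∀ a ∈ A, X b a = X b₀ a := by
    intro b hb a ha
    rcases eq_or_ne b b₀ with rfl | hne
    · rfl
    set m := (2:ℝ)⁻¹ • (b + b₀) with hm_def
    have hmB : m ∈ B := by
      have := hBv hb hb₀ (by norm_num : (0:ℝ) ≤ 2⁻¹) (by norm_num : (0:ℝ) ≤ 2⁻¹)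
        (by norm_num : (2:ℝ)⁻¹ + 2⁻¹ = 1)
      simpa [hm_def, smul_add] using this
    have hsum : b + b₀ = (2:ℝ) • m := (smul_inv_smul₀ (by norm_num) _).symm
    have heq : (X b a) ⊗ₜ[ℝ] (Y a b) + (X b₀ a) ⊗ₜ[ℝ] (Y a b₀)
        = (X m a) ⊗ₜ[ℝ] ((2:ℝ) • Y a m) := by
      calc (X b a) ⊗ₜ[ℝ] (Y a b) + (X b₀ a) ⊗ₜ[ℝ] (Y a b₀)
          = T (a ⊗ₜ b) + T (a ⊗ₜ b₀) := by rw [hT a ha b hb, hT a ha b₀ hb₀]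
        _ = T (a ⊗ₜ (b + b₀)) := by rw [← map_add, ← TensorProduct.tmul_add]
        _ = (2:ℝ) • T (a ⊗ₜ m) := by rw [hsum, TensorProduct.tmul_smul, map_smul]
        _ = (X m a) ⊗ₜ[ℝ] ((2:ℝ) • Y a m) := by
              rw [hT a ha m hmB, TensorProduct.tmul_smul]
    have step : ∀ b' ∈ B, ∀ b'' ∈ B,
        (X b' a) ⊗ₜ[ℝ] (Y a b') + (X b'' a) ⊗ₜ[ℝ] (Y a b'')
          = (X m a) ⊗ₜ[ℝ] ((2:ℝ) • Y a m) → b' ≠ b'' → X b' a = X m a := by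
      intro b' hb' b'' hb'' heq' hne'
      have hsp : Y a b' ∉ Submodule.span ℝ {Y a b''} := by
        apply spanB _ (memYB a ha b' hb') _ (memYB a ha b'' hb'')
        exact fun hEq => hne' ((Y a).injective hEq)
      obtain ⟨c, hc⟩ := tensor_aux_right heq' hsp
      have hc1 : c = 1 := by
        have := congrArg uA hc
        rw [huA _ (memXA b' hb' a ha), map_smul, huA _ (memXA m hmB a ha),
          smul_eq_mul, mul_one] at this
        exact this.symm
      rw [hc, hc1, one_smul]
    have h1 : X b a = X m a := step b hb b₀ hb₀ heq hne
    have h2 : X b₀ a = X m a := by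
      refine step b₀ hb₀ b hb ?_ (Ne.symm hne)
      rw [add_comm]; exact heq
    exact h1.trans h2.symm
  refine ⟨X b₀, hX b₀ hb₀, Y a₀, hY a₀ ha₀, ?_⟩
  intro a ha b hb
  rw [hT a ha b hb, claimY a ha b hb, claimX b hb a ha]
end
end

section
/- (Interactions between systems without entanglement are conditional transformations on classical degrees of freedom.) Let V, W be finite-dimensional real vector spaces with linear functionals u_V, u_W. Suppose A = convexHull(A₁ ∪ … ∪ A_m) ⊆ V, where the A_i are nonempty compact convex indecomposable subsets with u_V = 1 on each A_i and the family of linear spans of the A_i is linearly independent; similarly B = convexHull(B₁ ∪ … ∪ B_n) ⊆ W with B_j nonempty compact convex indecomposable, u_W = 1 on each B_j, and independent spans. Let T be a linear automorphism of V ⊗ W such that for every i, j and every a ∈ A_i, b ∈ B_j there are linear automorphisms X_b of V and Y_a of W with X_b(A_i) = A_i, Y_a(B_j) = B_j and T(a ⊗ b) = (X_b a) ⊗ (Y_a b), where X_b depends only on b and Y_a only on a. Then for every pair (i, j) there exist linear maps X_{ij} : V → V and Y_{ij} : W → W such that T(a ⊗ b) = (X_{ij} a) ⊗ (Y_{ij}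 b) for all a ∈ A_i and b ∈ B_j; that is, T acts as a product transformation conditioned only on the classical labels (i, j). -/
open scoped TensorProduct

noncomputable section

/-!
Fix the block `(i, j)` and `b ∈ B j`. Since `a ↦ T (a ⊗ b)` is linear, evaluating it at the
midpoint `c` of `a, a' ∈ A i` gives `X_b a ⊗ (Y_c b - Y_a b) + X_b a' ⊗ (Y_c b - Y_{a'} b) = 0`.
Two distinct points of the hyperplane `u_V = 1` are linearly independent, hence so are their
images under `X_b`, and the equation forces `Y_a b = Y_c b = Y_{a'} b`. So `Y_a` restricted to
`B j` does not depend on `a ∈ A i`; symmetrically `X_b` restricted to `A i` does not depend on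
`b ∈ B j`, and `X_{b₀} ⊗ Y_{a₀}` works for any `a₀ ∈ A i`, `b₀ ∈ B j`.
-/

theorem LinearIndependent.eq_zero_of_sum_tmul_eq_zero {ι K V W : Type*} [Fintype ι] [Field K]
    [AddCommGroup V] [Module K V] [AddCommGroup W] [Module K W] {v : ι → V}
    (hv : LinearIndependent K v) {w : ι → W} (h : ∑ i, v i ⊗ₜ[K] w i = 0) (i : ι) : w i = 0 := by
  classical
  obtain ⟨f, hf⟩ := LinearMap.exists_extend (Finsupp.lapply i ∘ₗ hv.repr)
  have hfv : ∀ j, f (v j) = if j = i then 1 else 0 := fun j => by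
    have := congrArg (fun g => g ⟨v j, Submodule.subset_span ⟨j, rfl⟩⟩) hf
    simp only [LinearMap.coe_comp, Function.comp_apply, Submodule.coe_subtype] at this
    rw [this, hv.repr_eq_single j _ rfl]
    simp [Finsupp.single_apply]
  simpa [hfv] using congrArg (fun z => TensorProduct.lid K W (f.rTensor W z)) h

theorem linearIndependent_pair_of_apply_eq_one {K V : Type*} [Field K] [AddCommGroup V]
    [Module K V] (u : V →ₗ[K] K) {x y : V} (hx : u x = 1) (hy : u y = 1) (hxy : x ≠ y) :
    LinearIndependent K ![x, y] := by
  rw [linearIndependent_fin2]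
  refine ⟨fun hy0 => by simp_all, fun c hc => hxy ?_⟩
  have hc1 : c = 1 := by simpa [hx, hy] using congrArg u hc
  simpa [hc1] using hc.symm

theorem Convex.eq_of_forall_map_eq_tmul {𝕜 V V' W' : Type*} [Field 𝕜] [LinearOrder 𝕜]
    [IsStrictOrderedRing 𝕜] [AddCommGroup V] [Module 𝕜 V] [AddCommGroup V'] [Module 𝕜 V']
    [AddCommGroup W'] [Module 𝕜 W'] {A : Set V} (hA : Convex 𝕜 A) (u : V →ₗ[𝕜] 𝕜)
    (hu : ∀ a ∈ A, u a = 1) (φ : V →ₗ[𝕜] V' ⊗[𝕜] W') (L : V →ₗ[𝕜] V')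
    (hL : Function.Injective L) (g : V → W') (hφ : ∀ a ∈ A, φ a = L a ⊗ₜ g a) :
    ∀ a ∈ A, ∀ a' ∈ A, g a = g a' := by
  intro a ha a' ha'
  obtain rfl | hne := eq_or_ne a a'
  · rfl
  have hind : LinearIndependent 𝕜 ![L a, L a'] := by
    have h := (linearIndependent_pair_of_apply_eq_one u (hu a ha) (hu a' ha') hne).map' L
      (LinearMap.ker_eq_bot.mpr hL)
    rwa [show ⇑L ∘ ![a, a'] = ![L a, L a'] by ext k; fin_cases k <;> rfl] at h
  set c := (2 : 𝕜)⁻¹ • a + (2 : 𝕜)⁻¹ • a'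
  have hc : c ∈ A := hA ha ha' (by positivity) (by positivity) (by norm_num)
  have hsplit : φ c = (2 : 𝕜)⁻¹ • φ a + (2 : 𝕜)⁻¹ • φ a' := by
    simp only [c, map_add, map_smul]
  rw [hφ c hc, hφ a ha, hφ a' ha', map_add, map_smul, map_smul, TensorProduct.add_tmul,
    ← TensorProduct.smul_tmul', ← TensorProduct.smul_tmul', ← smul_add, ← smul_add,
    smul_right_inj (by norm_num)] at hsplit
  have hzero : ∑ k, ![L a, L a'] k ⊗ₜ[𝕜] ![g c - g a, g c - g a'] k = 0 := by
    simp only [Fin.sum_univ_two, Matrix.cons_val_zero, Matrix.cons_val_one,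
      TensorProduct.tmul_sub]
    rw [← sub_eq_zero] at hsplit
    rw [← hsplit]
    abel
  have h₀ := hind.eq_zero_of_sum_tmul_eq_zero hzero 0
  have h₁ := hind.eq_zero_of_sum_tmul_eq_zero hzero 1
  simp only [Matrix.cons_val_zero, Matrix.cons_val_one, sub_eq_zero] at h₀ h₁
  rw [← h₀, h₁]

theorem interaction_is_conditional_on_classical_labels_general {V W : Type*}
    [NormedAddCommGroup V] [NormedSpace ℝ V]
    [NormedAddCommGroup W] [NormedSpace ℝ W]
    (uV : V →ₗ[ℝ] ℝ) (uW : W →ₗ[ℝ] ℝ)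
    (m n : ℕ) (A : Fin m → Set V) (B : Fin n → Set W)
    (hA : ∀ i, (A i).Nonempty ∧ IsCompact (A i) ∧ Convex ℝ (A i) ∧ ¬ Decomposable (A i))
    (hB : ∀ j, (B j).Nonempty ∧ IsCompact (B j) ∧ Convex ℝ (B j) ∧ ¬ Decomposable (B j))
    (huV : ∀ i, ∀ a ∈ A i, uV a = 1)
    (huW : ∀ j, ∀ b ∈ B j, uW b = 1)
    (T : (V ⊗[ℝ] W) ≃ₗ[ℝ] (V ⊗[ℝ] W))
    (X : W → (V ≃ₗ[ℝ] V)) (Y : V → (W ≃ₗ[ℝ] W))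
    (hT : ∀ i j, ∀ a ∈ A i, ∀ b ∈ B j, T (a ⊗ₜ[ℝ] b) = (X b a) ⊗ₜ[ℝ] (Y a b)) :
    ∀ i j, ∃ (Xij : V →ₗ[ℝ] V) (Yij : W →ₗ[ℝ] W),
      ∀ a ∈ A i, ∀ b ∈ B j, T (a ⊗ₜ[ℝ] b) = (Xij a) ⊗ₜ[ℝ] (Yij b) := by
  intro i j
  obtain ⟨a₀, ha₀⟩ := (hA i).1
  obtain ⟨b₀, hb₀⟩ := (hB j).1
  have hY : ∀ a ∈ A i, ∀ b ∈ B j, Y a b = Y a₀ b := fun a ha b hb =>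
    (hA i).2.2.1.eq_of_forall_map_eq_tmul uV (huV i)
      (T.toLinearMap ∘ₗ (TensorProduct.mk ℝ V W).flip b) (X b) (X b).injective (Y · b)
      (fun a ha => hT i j a ha b hb) a ha a₀ ha₀
  have hX : ∀ a ∈ A i, ∀ b ∈ B j, X b a = X b₀ a := fun a ha b hb =>
    (hB j).2.2.1.eq_of_forall_map_eq_tmul uW (huW j)
      ((TensorProduct.comm ℝ V W).toLinearMap ∘ₗ T.toLinearMap ∘ₗ TensorProduct.mk ℝ V W a)
      (Y a) (Y a).injective (X · a) (fun b hb => by simp [hT i j a ha b hb]) b hb b₀ hb₀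
  refine ⟨X b₀, Y a₀, fun a ha b hb => ?_⟩
  rw [hT i j a ha b hb, hX a ha b hb, hY a ha b hb]
  rfl

/-- Interactions between systems without entanglement are conditional transformations on
the classical degrees of freedom: on each block `A_i ⊠ B_j` the interaction acts as a
product transformation `X_{ij} ⊗ Y_{ij}`. -/
theorem interaction_is_conditional_on_classical_labels {V W : Type*}
    [NormedAddCommGroup V] [NormedSpace ℝ V] [FiniteDimensional ℝ V]
    [NormedAddCommGroup W] [NormedSpace ℝ W] [FiniteDimensional ℝ W]
    (uV : V →ₗ[ℝ] ℝ) (uW : W →ₗ[ℝ] ℝ)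
    (m n : ℕ) (A : Fin m → Set V) (B : Fin n → Set W)
    (hA : ∀ i, (A i).Nonempty ∧ IsCompact (A i) ∧ Convex ℝ (A i) ∧ ¬ Decomposable (A i))
    (hB : ∀ j, (B j).Nonempty ∧ IsCompact (B j) ∧ Convex ℝ (B j) ∧ ¬ Decomposable (B j))
    (huV : ∀ i, ∀ a ∈ A i, uV a = 1)
    (huW : ∀ j, ∀ b ∈ B j, uW b = 1)
    (hAind : iSupIndep fun i => Submodule.span ℝ (A i))
    (hBind : iSupIndep fun j => Submodule.span ℝ (B j))
    (Aset : Set V) (hAset : Aset = convexHull ℝ (⋃ i, A i))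
    (Bset : Set W) (hBset : Bset = convexHull ℝ (⋃ j, B j))
    (T : (V ⊗[ℝ] W) ≃ₗ[ℝ] (V ⊗[ℝ] W))
    (X : W → (V ≃ₗ[ℝ] V)) (Y : V → (W ≃ₗ[ℝ] W))
    (hX : ∀ i j, ∀ b ∈ B j, ⇑(X b) '' A i = A i)
    (hY : ∀ i j, ∀ a ∈ A i, ⇑(Y a) '' B j = B j)
    (hT : ∀ i j, ∀ a ∈ A i, ∀ b ∈ B j, T (a ⊗ₜ[ℝ] b) = (X b a) ⊗ₜ[ℝ] (Y a b)) :
    ∀ i j, ∃ (Xij : V →ₗ[ℝ] V) (Yij : W →ₗ[ℝ] W),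
      ∀ a ∈ A i, ∀ b ∈ B j, T (a ⊗ₜ[ℝ] b) = (Xij a) ⊗ₜ[ℝ] (Yij b) :=
  interaction_is_conditional_on_classical_labels_general uV uW m n A B hA hB huV huW T X Y hT
end
end

section
/- (Irreducible components of a transitive state space are all isomorphic.) Let S be a nonempty compact convex subset of a finite-dimensional real vector space V that spans V, equipped with a linear functional u : V → ℝ with u(s) = 1 for all s ∈ S, and suppose S is transitive: for any two extreme points x, y of S there is a linear automorphism T of V with T(S) = S and T(x) = y. Suppose S = convexHull(A₁ ∪ … ∪ A_n), where the A_i are nonempty compact convex indecomposable subsets of V whose linear spans form a linearly independent family. Then for every i and j there is a linear equivalence between the span of A_i and the span of A_j mapping A_i bijectively onto A_j. -/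
noncomputable section

/-!
Let `P k` be the projections of `V = ⨁ k, span (A k)`. For `s ∈ S` the weights `u (P k s)` are
nonnegative and sum to `1`, and `P k s` is its weight times a point of `A k`. Hence
`A k = S ∩ span (A k)`, and the extreme points of `A k` are extreme in `S`.

If `S = conv (⋃ k, B k)` is a second such decomposition, with projections `Q l`, then each
`u ∘ Q l` is nonnegative on `S`; for `b ∈ B i` and `l ≠ i` it vanishes at `b = ∑ k, P k b`, hence
at every `P k b`, so all `P k b` lie in `span (B i)`. Therefore `B i` is the convex hull of its
parts in `span (A k)` and in the sum of the other spans. If `B i` is indecomposable and `k` is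
chosen so that the first part is nonempty, the second one is empty, so `B i ⊆ S ∩ span (A k) = A k`.

A reversible `T` sending an extreme point of `A i` to one of `A j` turns `A` into the
decomposition `T '' A` of `S`; applied to `T` and to `T⁻¹`, this gives `T '' A i = A j`.
-/

open Set Submodule

namespace DirectSum.IsInternal

variable {R M N ι : Type*} [Ring R] [AddCommGroup M] [Module R M] [AddCommGroup N] [Module R N]
  [DecidableEq ι] {p : ι → Submodule R M} (h : IsInternal p)

def proj (i : ι) : M →ₗ[R] M :=
  (p i).subtype ∘ₗ component R ι (fun i => p i) i ∘ₗ
    (LinearEquiv.ofBijective (coeLinearMap p) h).symm.toLinearMap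

theorem proj_apply (i : ι) (x : M) :
    h.proj i x = ((LinearEquiv.ofBijective (coeLinearMap p) h).symm x i : M) :=
  rfl

theorem proj_mem (i : ι) (x : M) : h.proj i x ∈ p i :=
  Submodule.coe_mem _

theorem proj_eq_self {i : ι} {x : M} (hx : x ∈ p i) : h.proj i x = x := by
  rw [proj_apply, h.ofBijective_coeLinearMap_of_mem hx]

theorem proj_eq_zero {i j : ι} {x : M} (hx : x ∈ p j) (hij : i ≠ j) : h.proj i x = 0 := by
  rw [proj_apply, h.ofBijective_coeLinearMap_of_mem_ne hij.symm hx, ZeroMemClass.coe_zero]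

include h in
theorem map (e : M ≃ₗ[R] N) : IsInternal fun i => (p i).map (e : M →ₗ[R] N) := by
  rw [isInternal_submodule_iff_iSupIndep_and_iSup_eq_top] at h ⊢
  obtain ⟨hind, htop⟩ := h
  refine ⟨(iSupIndep_map_orderIso_iff (Submodule.orderIsoMapComap e)).2 hind, ?_⟩
  have := congrArg (Submodule.orderIsoMapComap e) htop
  rwa [OrderIso.map_iSup, OrderIso.map_top] at this

variable [Fintype ι]

theorem sum_proj (x : M) : ∑ i, h.proj i x = x := by
  let e := LinearEquiv.ofBijective (coeLinearMap p) h
  have hx : coeLinearMap p (e.symm x) = x := e.apply_symm_apply x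
  simpa [proj_apply, hx] using congrArg (coeLinearMap p) (DirectSum.sum_univ_of (e.symm x))

theorem proj_sum {x : ι → M} (hx : ∀ i, x i ∈ p i) (i : ι) : h.proj i (∑ j, x j) = x i := by
  rw [map_sum, Finset.sum_eq_single i (fun j _ hj => h.proj_eq_zero (hx j) hj.symm) (by simp),
    h.proj_eq_self (hx i)]

theorem mem_of_proj_eq_zero {i : ι} {x : M} (hx : ∀ j ≠ i, h.proj j x = 0) : x ∈ p i := by
  rw [← h.sum_proj x, Finset.sum_eq_single i (fun j _ => hx j) (by simp)]
  exact h.proj_mem i x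

theorem sub_proj_eq_sum_erase (i : ι) (x : M) :
    x - h.proj i x = ∑ j ∈ Finset.univ.erase i, h.proj j x := by
  rw [Finset.sum_erase_eq_sub (Finset.mem_univ i), h.sum_proj]

theorem sub_proj_mem_iSup (i : ι) (x : M) : x - h.proj i x ∈ ⨆ (j) (_ : j ≠ i), p j := by
  rw [h.sub_proj_eq_sum_erase]
  exact Submodule.sum_mem _ fun j hj =>
    le_iSup₂ (f := fun j (_ : j ≠ i) => p j) j (Finset.ne_of_mem_erase hj) (h.proj_mem j x)

end DirectSum.IsInternal

section Convex

variable {𝕜 E ι : Type*} [Field 𝕜] [LinearOrder 𝕜] [IsStrictOrderedRing 𝕜]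
  [AddCommGroup E] [Module 𝕜 E]

theorem Convex.exists_mem_sum_smul_eq {C : Set E} (hC : Convex 𝕜 C) (hne : C.Nonempty)
    (s : Finset ι) {w : ι → 𝕜} {c : ι → E} (hw : ∀ i ∈ s, 0 ≤ w i) (hc : ∀ i ∈ s, c i ∈ C) :
    ∃ z ∈ C, (∑ i ∈ s, w i) • z = ∑ i ∈ s, w i • c i := by
  classical
  induction s using Finset.induction_on with
  | empty => exact ⟨hne.some, hne.some_mem, by simp⟩
  | insert i s hi ih =>
    obtain ⟨z, hz, hsum⟩ := ih (fun j hj => hw j (Finset.mem_insert_of_mem hj))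
      (fun j hj => hc j (Finset.mem_insert_of_mem hj))
    obtain ⟨z', hz', hz'eq⟩ := hC.exists_mem_add_smul_eq (hc i (Finset.mem_insert_self i s)) hz
      (hw i (Finset.mem_insert_self i s))
      (Finset.sum_nonneg fun j hj => hw j (Finset.mem_insert_of_mem hj))
    exact ⟨z', hz', by rw [Finset.sum_insert hi, Finset.sum_insert hi, hz'eq, hsum]⟩

theorem exists_sum_smul_eq_of_mem_convexHull_iUnion [Fintype ι] {A : ι → Set E}
    (hne : ∀ i, (A i).Nonempty) (hA : ∀ i, Convex 𝕜 (A i)) {x : E}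
    (hx : x ∈ convexHull 𝕜 (⋃ i, A i)) :
    ∃ (t : ι → 𝕜) (a : ι → E), (∀ i, 0 ≤ t i) ∧ ∑ i, t i = 1 ∧ (∀ i, a i ∈ A i) ∧
      ∑ i, t i • a i = x := by
  classical
  refine convexHull_min (t := {x | ∃ (t : ι → 𝕜) (a : ι → E), (∀ i, 0 ≤ t i) ∧ ∑ i, t i = 1 ∧
    (∀ i, a i ∈ A i) ∧ ∑ i, t i • a i = x}) ?_ ?_ hx
  · refine iUnion_subset fun i y hy => ⟨Pi.single i 1, Function.update (fun j => (hne j).some) i y,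
      ?_, by simp, fun j => ?_, ?_⟩
    · intro j
      rw [Pi.single_apply]
      split_ifs <;> norm_num
    · rcases eq_or_ne j i with rfl | hj
      · simpa using hy
      · simpa [hj] using (hne j).some_mem
    · rw [Finset.sum_eq_single i (fun j _ hj => by simp [hj]) (by simp)]
      simp
  · rintro _ ⟨t, a, ht, ht1, ha, rfl⟩ _ ⟨t', a', ht', ht1', ha', rfl⟩ θ μ hθ hμ hθμ
    choose b hb hab using fun i => (hA i).exists_mem_add_smul_eq (ha i) (ha' i)
      (mul_nonneg hθ (ht i)) (mul_nonneg hμ (ht' i))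
    refine ⟨fun i => θ * t i + μ * t' i, b,
      fun i => add_nonneg (mul_nonneg hθ (ht i)) (mul_nonneg hμ (ht' i)), ?_, hb, ?_⟩
    · rw [Finset.sum_add_distrib, ← Finset.mul_sum, ← Finset.mul_sum, ht1, ht1', mul_one, mul_one,
        hθμ]
    · simp_rw [hab, Finset.sum_add_distrib, Finset.smul_sum, smul_smul]

end Convex

theorem Decomposable.image {V W : Type*} [NormedAddCommGroup V] [NormedSpace ℝ V]
    [FiniteDimensional ℝ V] [NormedAddCommGroup W] [NormedSpace ℝ W] (T : V ≃ₗ[ℝ] W)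
    {X : Set V} (h : Decomposable X) : Decomposable (T '' X) := by
  obtain ⟨S₁, S₂, h₁, hc₁, hv₁, h₂, hc₂, hv₂, hspan, rfl⟩ := h
  have hT : Continuous T := T.toLinearMap.continuous_of_finiteDimensional
  refine ⟨T '' S₁, T '' S₂, h₁.image T, hc₁.image hT, hv₁.linear_image (T : V →ₗ[ℝ] W),
    h₂.image T, hc₂.image hT, hv₂.linear_image (T : V →ₗ[ℝ] W), ?_, ?_⟩
  · simp only [← LinearEquiv.coe_coe, span_image]
    rw [← Submodule.map_inf _ T.injective, hspan, Submodule.map_bot]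
  · rw [← LinearEquiv.coe_coe, LinearMap.image_convexHull, image_union]

theorem LinearEquiv.exists_span_bijOn {R V W : Type*} [Semiring R] [AddCommMonoid V] [Module R V]
    [AddCommMonoid W] [Module R W] (T : V ≃ₗ[R] W) {X : Set V} {Y : Set W} (h : T '' X = Y) :
    ∃ e : span R X ≃ₗ[R] span R Y,
      BijOn (fun x : span R X => (e x : W)) {x | (x : V) ∈ X} Y := by
  have hmap : (span R X).map (T : V →ₗ[R] W) = span R Y := by
    rw [← span_image, LinearEquiv.coe_coe, h]
  subst h
  refine ⟨T.ofSubmodules _ _ hmap, fun x hx => mem_image_of_mem T hx,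
    fun x _ y _ hxy => Subtype.ext (T.injective hxy), ?_⟩
  rintro _ ⟨x, hx, rfl⟩
  exact ⟨⟨x, subset_span hx⟩, hx, rfl⟩

structure IsDirectDecomposition {V ι : Type*} [AddCommGroup V] [Module ℝ V] [DecidableEq ι]
    (S : Set V) (A : ι → Set V) : Prop where
  nonempty : ∀ k, (A k).Nonempty
  convex : ∀ k, Convex ℝ (A k)
  isInternal : DirectSum.IsInternal fun k => span ℝ (A k)
  eq_convexHull : S = convexHull ℝ (⋃ k, A k)

theorem IsDirectDecomposition.of_iSupIndep {V ι : Type*} [AddCommGroup V] [Module ℝ V]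
    [DecidableEq ι] {S : Set V} {A : ι → Set V} (hne : ∀ k, (A k).Nonempty)
    (hconv : ∀ k, Convex ℝ (A k)) (hind : iSupIndep fun k => span ℝ (A k))
    (hspan : span ℝ S = ⊤) (hS : S = convexHull ℝ (⋃ k, A k)) : IsDirectDecomposition S A where
  nonempty := hne
  convex := hconv
  isInternal := by
    refine DirectSum.isInternal_submodule_of_iSupIndep_of_iSup_eq_top hind (eq_top_iff.2 ?_)
    rw [← hspan, ← span_iUnion, span_le, hS]
    exact convexHull_min subset_span (span ℝ _).convex
  eq_convexHull := hS

namespace IsDirectDecomposition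

section Basic

variable {V W ι : Type*} [AddCommGroup V] [Module ℝ V] [AddCommGroup W] [Module ℝ W]
  [DecidableEq ι] {S : Set V} {A : ι → Set V} (hA : IsDirectDecomposition S A)
  {u : V →ₗ[ℝ] ℝ} {s : V}
include hA

theorem subset (k : ι) : A k ⊆ S :=
  hA.eq_convexHull ▸ (subset_iUnion A k).trans (subset_convexHull ℝ _)

theorem image (T : V ≃ₗ[ℝ] W) : IsDirectDecomposition (T '' S) fun k => T '' A k where
  nonempty k := (hA.nonempty k).image T
  convex k := (hA.convex k).linear_image (T : V →ₗ[ℝ] W)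
  isInternal := by
    simpa only [← LinearEquiv.coe_coe, Submodule.span_image] using hA.isInternal.map T
  eq_convexHull := by
    rw [hA.eq_convexHull, ← LinearEquiv.coe_coe, LinearMap.image_convexHull, image_iUnion]

abbrev proj (k : ι) : V →ₗ[ℝ] V :=
  hA.isInternal.proj k

theorem eq_of_mem_of_mem (hu : ∀ s ∈ S, u s = 1) {k l : ι} (hk : s ∈ A k) (hl : s ∈ A l) :
    k = l := by
  by_contra hkl
  have h := hA.isInternal.proj_eq_zero (subset_span hl) hkl
  rw [hA.isInternal.proj_eq_self (subset_span hk)] at h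
  simpa [h] using hu s (hA.subset k hk)

variable [Fintype ι]

theorem exists_proj_eq (hu : ∀ s ∈ S, u s = 1) (hs : s ∈ S) (k : ι) :
    0 ≤ u (hA.proj k s) ∧ ∃ a ∈ A k, hA.proj k s = u (hA.proj k s) • a := by
  obtain ⟨t, a, ht, -, ha, rfl⟩ := exists_sum_smul_eq_of_mem_convexHull_iUnion hA.nonempty
    hA.convex (hA.eq_convexHull ▸ hs)
  rw [hA.isInternal.proj_sum (fun l => smul_mem _ _ (subset_span (ha l))), map_smul,
    hu _ (hA.subset k (ha k)), smul_eq_mul, mul_one]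
  exact ⟨ht k, a k, ha k, rfl⟩

theorem weight_nonneg (hu : ∀ s ∈ S, u s = 1) (hs : s ∈ S) (k : ι) : 0 ≤ u (hA.proj k s) :=
  (hA.exists_proj_eq hu hs k).1

theorem sum_weight (s : V) : ∑ k, u (hA.proj k s) = u s := by
  rw [← map_sum, hA.isInternal.sum_proj]

theorem weight_le_one (hu : ∀ s ∈ S, u s = 1) (hs : s ∈ S) (k : ι) : u (hA.proj k s) ≤ 1 := by
  calc u (hA.proj k s) ≤ ∑ l, u (hA.proj l s) :=
        Finset.single_le_sum (fun l _ => hA.weight_nonneg hu hs l) (Finset.mem_univ k)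
    _ = 1 := by rw [hA.sum_weight, hu s hs]

theorem proj_eq_zero_of_weight_eq_zero (hu : ∀ s ∈ S, u s = 1) (hs : s ∈ S) {k : ι}
    (h : u (hA.proj k s) = 0) : hA.proj k s = 0 := by
  obtain ⟨-, a, -, ha⟩ := hA.exists_proj_eq hu hs k
  rw [ha, h, zero_smul]

theorem inv_smul_proj_mem (hu : ∀ s ∈ S, u s = 1) (hs : s ∈ S) {k : ι}
    (h : u (hA.proj k s) ≠ 0) : (u (hA.proj k s))⁻¹ • hA.proj k s ∈ A k := by
  obtain ⟨-, a, ha, hproj⟩ := hA.exists_proj_eq hu hs k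
  rwa [(inv_smul_eq_iff₀ h).2 hproj]

theorem mem_of_mem_span (hu : ∀ s ∈ S, u s = 1) (hs : s ∈ S) {k : ι} (hk : s ∈ span ℝ (A k)) :
    s ∈ A k := by
  obtain ⟨-, a, ha, hproj⟩ := hA.exists_proj_eq hu hs k
  rw [hA.isInternal.proj_eq_self hk, hu s hs, one_smul] at hproj
  exact hproj ▸ ha

theorem proj_eq_zero_of_mem_openSegment (hu : ∀ s ∈ S, u s = 1) {x y z : V} (hx : x ∈ S)
    (hy : y ∈ S) (hz : z ∈ openSegment ℝ x y) {k : ι} (h : hA.proj k z = 0) :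
    hA.proj k x = 0 := by
  obtain ⟨θ, μ, hθ, hμ, -, rfl⟩ := hz
  refine hA.proj_eq_zero_of_weight_eq_zero hu hx ?_
  have hzero := congrArg u h
  simp only [map_add, map_smul, smul_eq_mul, map_zero] at hzero
  nlinarith [hA.weight_nonneg hu hx k, hA.weight_nonneg hu hy k]

theorem extremePoints_subset (hu : ∀ s ∈ S, u s = 1) (k : ι) :
    extremePoints ℝ (A k) ⊆ extremePoints ℝ S := by
  intro a ha
  have hmem : ∀ x ∈ S, ∀ y ∈ S, a ∈ openSegment ℝ x y → x ∈ A k := fun x hx y hy hxy =>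
    hA.mem_of_mem_span hu hx <| hA.isInternal.mem_of_proj_eq_zero fun l hl =>
      hA.proj_eq_zero_of_mem_openSegment hu hx hy hxy
        (hA.isInternal.proj_eq_zero (subset_span ha.1) hl)
  exact ⟨hA.subset k ha.1, fun x hx y hy hxy =>
    ha.2 (hmem x hx y hy hxy) (hmem y hy x hx (openSegment_symm ℝ x y ▸ hxy)) hxy⟩

end Basic

section TwoDecompositions

variable {V ι : Type*} [AddCommGroup V] [Module ℝ V] [DecidableEq ι] [Fintype ι]
  {S : Set V} {A B : ι → Set V} (hA : IsDirectDecomposition S A) (hB : IsDirectDecomposition S B)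
  {u : V →ₗ[ℝ] ℝ} (hu : ∀ s ∈ S, u s = 1) {i : ι} {b : V}
include hA hB hu

theorem proj_mem_span_of_mem (hb : b ∈ B i) (k : ι) : hA.proj k b ∈ span ℝ (B i) := by
  have hbS := hB.subset i hb
  choose a ha hproj using fun k => (hA.exists_proj_eq hu hbS k).2
  refine hB.isInternal.mem_of_proj_eq_zero fun l hl => ?_
  have hterm : ∀ k, 0 ≤ u (hA.proj k b) * u (hB.proj l (a k)) := fun k =>
    mul_nonneg (hA.weight_nonneg hu hbS k) (hB.weight_nonneg hu (hA.subset k (ha k)) l)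
  have hsum : ∑ k, u (hA.proj k b) * u (hB.proj l (a k)) = 0 := by
    simp_rw [← smul_eq_mul, ← map_smul, ← hproj, ← map_sum, hA.isInternal.sum_proj,
      hB.isInternal.proj_eq_zero (subset_span hb) hl, map_zero]
  rcases mul_eq_zero.1 ((Finset.sum_eq_zero_iff_of_nonneg fun k _ => hterm k).1 hsum k
    (Finset.mem_univ k)) with h | h
  · rw [hA.proj_eq_zero_of_weight_eq_zero hu hbS h, map_zero]
  · rw [hproj k, map_smul, hB.proj_eq_zero_of_weight_eq_zero hu (hA.subset k (ha k)) h, smul_zero]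

theorem inv_smul_proj_mem_inter (hb : b ∈ B i) {k : ι} (h : u (hA.proj k b) ≠ 0) :
    (u (hA.proj k b))⁻¹ • hA.proj k b ∈ A k ∩ B i := by
  have hk := hA.inv_smul_proj_mem hu (hB.subset i hb) h
  exact ⟨hk, hB.mem_of_mem_span hu (hA.subset k hk)
    (smul_mem _ _ (proj_mem_span_of_mem hA hB hu hb k))⟩

theorem exists_sub_proj_eq_smul_mem (hb : b ∈ B i) (k : ι) :
    ∃ c ∈ B i, b - hA.proj k b = (1 - u (hA.proj k b)) • c := by
  have hc : ∀ l, ∃ c ∈ B i, hA.proj l b = u (hA.proj l b) • c := fun l => by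
    by_cases h : u (hA.proj l b) = 0
    · exact ⟨b, hb, by rw [h, zero_smul, hA.proj_eq_zero_of_weight_eq_zero hu (hB.subset i hb) h]⟩
    · exact ⟨_, (inv_smul_proj_mem_inter hA hB hu hb h).2, (smul_inv_smul₀ h _).symm⟩
  choose c hcB hc using hc
  obtain ⟨z, hz, hzeq⟩ := (hB.convex i).exists_mem_sum_smul_eq ⟨b, hb⟩ (Finset.univ.erase k)
    (fun l _ => hA.weight_nonneg hu (hB.subset i hb) l) (fun l _ => hcB l)
  refine ⟨z, hz, ?_⟩
  rw [← hu b (hB.subset i hb), ← hA.sum_weight, ← Finset.sum_erase_eq_sub (Finset.mem_univ k),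
    hzeq, hA.isInternal.sub_proj_eq_sum_erase]
  exact Finset.sum_congr rfl fun l _ => hc l

theorem subset_convexHull_inter_union (k : ι) :
    B i ⊆ convexHull ℝ ((B i ∩ span ℝ (A k)) ∪
      (B i ∩ ↑(⨆ (l) (_ : l ≠ k), span ℝ (A l)))) := by
  intro b hb
  obtain ⟨c, hc, hsub⟩ := hA.exists_sub_proj_eq_smul_mem hB hu hb k
  have hW := hA.isInternal.sub_proj_mem_iSup k b
  rcases eq_or_ne (u (hA.proj k b)) 0 with h0 | h0
  · refine subset_convexHull ℝ _ (Or.inr ⟨hb, ?_⟩)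
    simpa [hA.proj_eq_zero_of_weight_eq_zero hu (hB.subset i hb) h0] using hW
  rcases eq_or_ne (u (hA.proj k b)) 1 with h1 | h1
  · refine subset_convexHull ℝ _ (Or.inl ⟨hb, ?_⟩)
    rw [h1, sub_self, zero_smul, sub_eq_zero] at hsub
    exact hsub ▸ hA.isInternal.proj_mem k b
  have hc₁ := hA.inv_smul_proj_mem_inter hB hu hb h0
  have hcW := (smul_mem_iff _ (sub_ne_zero.2 h1.symm)).1 (hsub ▸ hW)
  have hb_eq : b = u (hA.proj k b) • ((u (hA.proj k b))⁻¹ • hA.proj k b) +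
      (1 - u (hA.proj k b)) • c := by
    rw [← hsub, smul_inv_smul₀ h0, add_sub_cancel]
  rw [hb_eq]
  refine convex_convexHull ℝ _ (subset_convexHull ℝ _ ?_) (subset_convexHull ℝ _ ?_)
    (hA.weight_nonneg hu (hB.subset i hb) k)
    (sub_nonneg.2 (hA.weight_le_one hu (hB.subset i hb) k)) (add_sub_cancel _ _)
  · exact Or.inl ⟨hc₁.2, subset_span hc₁.1⟩
  · exact Or.inr ⟨hc, hcW⟩

end TwoDecompositions

section FiniteDimensional

variable {V ι : Type*} [NormedAddCommGroup V] [NormedSpace ℝ V] [FiniteDimensional ℝ V]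
  [DecidableEq ι] [Fintype ι] {S : Set V} {A : ι → Set V} (hA : IsDirectDecomposition S A)
  {u : V →ₗ[ℝ] ℝ} (hu : ∀ s ∈ S, u s = 1)
include hA hu

section TwoDecompositions

variable {B : ι → Set V} (hB : IsDirectDecomposition S B) {i : ι}
include hB

theorem decomposable_of_not_subset_span (hc : IsCompact (B i)) {b₀ : V} (hb₀ : b₀ ∈ B i)
    {k : ι} (hk : hA.proj k b₀ ≠ 0) (hnot : ¬B i ⊆ span ℝ (A k)) : Decomposable (B i) := by
  set W := ⨆ (l) (_ : l ≠ k), span ℝ (A l)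
  have hw₀ : u (hA.proj k b₀) ≠ 0 := fun h =>
    hk (hA.proj_eq_zero_of_weight_eq_zero hu (hB.subset i hb₀) h)
  have hc₀ := hA.inv_smul_proj_mem_inter hB hu hb₀ hw₀
  obtain ⟨b₁, hb₁, hb₁k⟩ := not_subset.1 hnot
  obtain ⟨c₁, hc₁, hsub⟩ := hA.exists_sub_proj_eq_smul_mem hB hu hb₁ k
  have hw₁ : 1 - u (hA.proj k b₁) ≠ 0 := by
    intro h
    rw [h, zero_smul, sub_eq_zero] at hsub
    exact hb₁k (hsub ▸ hA.isInternal.proj_mem k b₁)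
  have hc₁W : c₁ ∈ W := (smul_mem_iff _ hw₁).1 (hsub ▸ hA.isInternal.sub_proj_mem_iSup k b₁)
  refine ⟨B i ∩ span ℝ (A k), B i ∩ W, ⟨_, hc₀.2, subset_span hc₀.1⟩,
    hc.inter_right (span ℝ (A k)).closed_of_finiteDimensional,
    (hB.convex i).inter (span ℝ (A k)).convex, ⟨c₁, hc₁, hc₁W⟩,
    hc.inter_right W.closed_of_finiteDimensional, (hB.convex i).inter W.convex, ?_, ?_⟩
  · exact disjoint_iff.1 ((hA.isInternal.submodule_iSupIndep k).mono
      (span_le.2 inter_subset_right) (span_le.2 inter_subset_right))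
  · exact (hA.subset_convexHull_inter_union hB hu k).antisymm
      (convexHull_min (union_subset inter_subset_left inter_subset_left) (hB.convex i))

theorem exists_subset_of_not_decomposable (hc : IsCompact (B i)) (hnd : ¬Decomposable (B i)) :
    ∃ k, B i ⊆ A k := by
  obtain ⟨b₀, hb₀⟩ := hB.nonempty i
  have hsum : ∑ k, hA.proj k b₀ ≠ 0 := by
    rw [hA.isInternal.sum_proj]
    rintro rfl
    simpa using hu 0 (hB.subset i hb₀)
  obtain ⟨k, -, hk⟩ := Finset.exists_ne_zero_of_sum_ne_zero hsum
  have hspan : B i ⊆ span ℝ (A k) := by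
    by_contra hnot
    exact hnd (hA.decomposable_of_not_subset_span hu hB hc hb₀ hk hnot)
  exact ⟨k, fun b hb => hA.mem_of_mem_span hu (hB.subset i hb) (hspan hb)⟩

end TwoDecompositions

theorem image_subset_of_image_eq_self (T : V ≃ₗ[ℝ] V) (hT : T '' S = S) {i j : ι} {a : V}
    (ha : a ∈ A i) (hTa : T a ∈ A j) (hc : IsCompact (A i)) (hnd : ¬Decomposable (A i)) :
    T '' A i ⊆ A j := by
  have hB : IsDirectDecomposition S fun k => T '' A k := hT ▸ hA.image T
  obtain ⟨k, hk⟩ := hA.exists_subset_of_not_decomposable hu hB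
    (hc.image T.toLinearMap.continuous_of_finiteDimensional)
    (fun h => hnd (by simpa [image_image] using h.image T.symm))
  rwa [hA.eq_of_mem_of_mem hu (hk ⟨a, ha, rfl⟩) hTa] at hk

theorem image_eq_of_image_eq_self (T : V ≃ₗ[ℝ] V) (hT : T '' S = S) {i j : ι} {a : V}
    (ha : a ∈ A i) (hTa : T a ∈ A j) (hci : IsCompact (A i)) (hndi : ¬Decomposable (A i))
    (hcj : IsCompact (A j)) (hndj : ¬Decomposable (A j)) : T '' A i = A j := by
  have hT' : T.symm '' S = S :=
    calc T.symm '' S = T.symm '' (T '' S) := by rw [hT]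
      _ = S := by simp [image_image]
  refine (hA.image_subset_of_image_eq_self hu T hT ha hTa hci hndi).antisymm ?_
  have := hA.image_subset_of_image_eq_self hu T.symm hT' hTa (by simpa using ha) hcj hndj
  rwa [image_subset_iff, ← T.image_eq_preimage_symm] at this

end FiniteDimensional

end IsDirectDecomposition

theorem transitive_irreducible_components_isomorphic_general {V : Type*}
    [NormedAddCommGroup V] [NormedSpace ℝ V] [FiniteDimensional ℝ V]
    (S : Set V)
    (hspan : Submodule.span ℝ S = ⊤)
    (u : V →ₗ[ℝ] ℝ) (hu : ∀ s ∈ S, u s = 1)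
    (htrans : ∀ x ∈ Set.extremePoints ℝ S, ∀ y ∈ Set.extremePoints ℝ S,
      ∃ T : V ≃ₗ[ℝ] V, ⇑T '' S = S ∧ T x = y)
    (n : ℕ) (A : Fin n → Set V)
    (hA : ∀ i, (A i).Nonempty ∧ IsCompact (A i) ∧ Convex ℝ (A i) ∧ ¬ Decomposable (A i))
    (hind : iSupIndep fun i => Submodule.span ℝ (A i))
    (hSdecomp : S = convexHull ℝ (⋃ i, A i)) :
    ∀ i j, ∃ e : (Submodule.span ℝ (A i)) ≃ₗ[ℝ] (Submodule.span ℝ (A j)),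
      Set.BijOn (fun x : Submodule.span ℝ (A i) => (e x : V))
        {x : Submodule.span ℝ (A i) | (x : V) ∈ A i} (A j) := by
  intro i j
  have hdec : IsDirectDecomposition S A :=
    .of_iSupIndep (fun k => (hA k).1) (fun k => (hA k).2.2.1) hind hspan hSdecomp
  obtain ⟨a, ha⟩ := (hA i).2.1.extremePoints_nonempty (hA i).1
  obtain ⟨b, hb⟩ := (hA j).2.1.extremePoints_nonempty (hA j).1
  obtain ⟨T, hTS, rfl⟩ :=
    htrans a (hdec.extremePoints_subset hu i ha) b (hdec.extremePoints_subset hu j hb)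
  exact T.exists_span_bijOn <| hdec.image_eq_of_image_eq_self hu T hTS ha.1 hb.1
    (hA i).2.1 (hA i).2.2.2 (hA j).2.1 (hA j).2.2.2

/-- Irreducible components of a transitive state space are all isomorphic: there is a
linear equivalence between the spans of any two components mapping one component
bijectively onto the other. -/
theorem transitive_irreducible_components_isomorphic {V : Type*}
    [NormedAddCommGroup V] [NormedSpace ℝ V] [FiniteDimensional ℝ V]
    (S : Set V) (hS : S.Nonempty) (hSc : IsCompact S) (hSv : Convex ℝ S)
    (hspan : Submodule.span ℝ S = ⊤)
    (u : V →ₗ[ℝ] ℝ) (hu : ∀ s ∈ S, u s = 1)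
    (htrans : ∀ x ∈ Set.extremePoints ℝ S, ∀ y ∈ Set.extremePoints ℝ S,
      ∃ T : V ≃ₗ[ℝ] V, ⇑T '' S = S ∧ T x = y)
    (n : ℕ) (A : Fin n → Set V)
    (hA : ∀ i, (A i).Nonempty ∧ IsCompact (A i) ∧ Convex ℝ (A i) ∧ ¬ Decomposable (A i))
    (hind : iSupIndep fun i => Submodule.span ℝ (A i))
    (hSdecomp : S = convexHull ℝ (⋃ i, A i)) :
    ∀ i j, ∃ e : (Submodule.span ℝ (A i)) ≃ₗ[ℝ] (Submodule.span ℝ (A j)),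
      Set.BijOn (fun x : Submodule.span ℝ (A i) => (e x : V))
        {x : Submodule.span ℝ (A i) | (x : V) ∈ A i} (A j) :=
  transitive_irreducible_components_isomorphic_general S hspan u hu htrans n A hA hind hSdecomp
end
end
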